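/- arXiv:1506.06069 — 5 statements merged into one kernel-verified Lean document; each statement's English description precedes it below -/
import Mathlib

section
/- Let Y = {Y_1,…,Y_s} be a partition of H and Z = {Z_1,…,Z_t} be a partition of N, with Z_{k*} a block of Z of maximal size. If there exists a resolute refinement of the Pareto social choice correspondence Par which is Y-anonymous and Z-neutral, then gcd( gcd(|Y_1|,…,|Y_s|), (|Z_{k*}|)! ) = 1. -/
/-!
Common framework: preferences on `n ≥ 2` alternatives (`Fin n`) expressed by `h ≥ 2`
individuals (`Fin h`).  Following the paper, a linear order `q ∈ L(N)` is identified with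
the permutation of `Fin n` sending each rank position (`0` = best) to the alternative
occupying that position.
-/

/-- A preference relation (a linear order on the set `Fin n` of alternatives), identified
with the permutation sending each rank position (`0` = best) to the alternative at
that position. -/
abbrev Pref (n : ℕ) := Equiv.Perm (Fin n)

/-- `x ⪰_q y` : alternative `x` is weakly preferred to `y` in `q`. -/
def prefGE {n : ℕ} (q : Pref n) (x y : Fin n) : Prop := q.symm x ≤ q.symm y

/-- `x ≻_q y` : alternative `x` is strictly preferred to `y` in `q`. -/
def prefGT {n : ℕ} (q : Pref n) (x y : Fin n) : Prop := q.symm x < q.symm y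

instance {n : ℕ} (q : Pref n) (x y : Fin n) : Decidable (prefGT q x y) :=
  inferInstanceAs (Decidable (q.symm x < q.symm y))

/-- A preference profile: one preference relation for each individual. -/
abbrev Profile (n h : ℕ) := Fin h → Pref n

/-- A social choice correspondence (the nonemptiness of its values is `IsSCC`). -/
abbrev SCC (n h : ℕ) := Profile n h → Set (Fin n)

/-- `C` has nonempty values, i.e. `C` really is a social choice correspondence. -/
def IsSCC {n h : ℕ} (C : SCC n h) : Prop := ∀ p, (C p).Nonempty

/-- `C` is resolute: it always selects exactly one alternative. -/
def Resolute {n h : ℕ} (C : SCC n h) : Prop := ∀ p, ∃ x, C p = {x}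

/-- `C'` is a refinement of `C`. -/
def Refines {n h : ℕ} (C' C : SCC n h) : Prop := ∀ p, C' p ⊆ C p

/-- The order-reversing permutation `ρ₀ : r ↦ n - r + 1`. -/
def rho0 (n : ℕ) : Equiv.Perm (Fin n) := Fin.revPerm

/-- The profile `p^{(id,id,ρ₀)}` obtained from `p` by reversing every individual
preference. -/
def revProfile {n h : ℕ} (p : Profile n h) : Profile n h := fun i => p i * rho0 n

/-- `C` is immune to the reversal bias. -/
def Immune {n h : ℕ} (C : SCC n h) : Prop :=
  ∀ (p : Profile n h) (x : Fin n), C p = {x} → C (revProfile p) ≠ C p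

/-- `Y` is a partition: nonempty, pairwise disjoint, covering blocks. -/
def IsPartition {α : Type*} {s : ℕ} (Y : Fin s → Finset α) : Prop :=
  (∀ j, (Y j).Nonempty) ∧ (∀ j k, j ≠ k → Disjoint (Y j) (Y k)) ∧ (∀ a, ∃ j, a ∈ Y j)

/-- The Pareto social choice correspondence: `x` is selected iff no alternative
unanimously beats it, i.e. for every other `y` some individual prefers `x` to `y`. -/
def Par {n h : ℕ} : SCC n h :=
  fun p => {x | ∀ y, y ≠ x → ∃ i, prefGT (p i) x y}

/-- The profile `p^{(φ,ψ,ρ)}`: individual `i` is renamed `φ(i)`, alternative `x` is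
renamed `ψ(x)`, ranks are moved by `ρ`. -/
def pact {n h : ℕ} (φ : Equiv.Perm (Fin h)) (ψ ρ : Equiv.Perm (Fin n))
    (p : Profile n h) : Profile n h :=
  fun i => ψ * p (φ⁻¹ i) * ρ

/-- Anonymity with respect to the partition `Y` of the individuals. -/
def YAnonymous {n h s : ℕ} (Y : Fin s → Finset (Fin h)) (C : SCC n h) : Prop :=
  ∀ (p : Profile n h) (φ : Equiv.Perm (Fin h)),
    (∀ j, (Y j).image φ = Y j) → C (pact φ 1 1 p) = C p

/-- Neutrality with respect to the partition `Z` of the alternatives. -/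
def ZNeutral {n h t : ℕ} (Z : Fin t → Finset (Fin n)) (C : SCC n h) : Prop :=
  ∀ (p : Profile n h) (ψ : Equiv.Perm (Fin n)),
    (∀ k, (Z k).image ψ = Z k) → C (pact 1 ψ 1 p) = ψ '' C p

/-!
Suppose a prime `p` divides every `|Y_j|` and `p ≤ |Z_{k*}|`. Take a `p`-cycle `ψ` on a
`p`-element set `A ⊆ Z_{k*}`, and a permutation `φ` preserving every `Y_j` which moves the
individuals of each block cyclically through labels `c ∈ ℤ/p`, so that `c ∘ φ = c + 1`. If `q`
ranks `A` on top, the profile `i ↦ ψ ^ c(i) * q` is fixed by `(φ, ψ)`. Anonymity and neutrality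
then make the chosen alternative a fixed point of `ψ`, so it lies outside `A`; but every
individual ranks all of `A` above it, contradicting Pareto optimality.
-/

open Equiv Finset

theorem Equiv.Perm.IsCycleOn.pow_card_eq_one {α : Type*} [DecidableEq α] [Fintype α]
    {f : Perm α} {s : Finset α} (hf : f.IsCycleOn s) (hs : f.support ⊆ s) : f ^ #s = 1 := by
  ext a
  by_cases ha : a ∈ s
  · simp [hf.pow_card_apply ha]
  · have : a ∉ (f ^ #s).support := fun h => ha (hs (Perm.support_pow_le f _ h))
    simpa using Perm.notMem_support.mp this

theorem pow_val_add_one {M : Type*} [Monoid M] {p : ℕ} [NeZero p] {g : M} (hg : g ^ p = 1)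
    (a : ZMod p) : g ^ (a + 1).val = g * g ^ a.val := by
  rw [ZMod.val_add, ← pow_eq_pow_mod _ hg, pow_add, ZMod.val_one_eq_one_mod,
    ← pow_eq_pow_mod _ hg, pow_one, pow_mul_comm']

theorem exists_perm_fiberwise_shift {α ι : Type*} [Fintype α] [DecidableEq ι] (f : α → ι)
    (p : ℕ) [NeZero p] (hp : ∀ j, p ∣ Fintype.card {a // f a = j}) :
    ∃ (φ : Perm α) (c : α → ZMod p), (∀ a, f (φ a) = f a) ∧ ∀ a, c (φ a) = c a + 1 := by
  have e : ∀ j, {a // f a = j} ≃ Fin (Fintype.card {a // f a = j} / p) × ZMod p := fun j =>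
    Fintype.equivOfCardEq (by simp [ZMod.card, Nat.div_mul_cancel (hp j)])
  obtain ⟨E, hE⟩ : ∃ E : α ≃ Σ j, Fin (Fintype.card {a // f a = j} / p) × ZMod p,
      ∀ a, (E a).1 = f a :=
    ⟨(sigmaFiberEquiv f).symm.trans (Equiv.sigmaCongrRight e), fun _ => rfl⟩
  let shift : Perm (Σ j, Fin (Fintype.card {a // f a = j} / p) × ZMod p) :=
    Equiv.sigmaCongrRight fun _ => prodCongr (Equiv.refl _) (Equiv.addRight 1)
  refine ⟨E.trans (shift.trans E.symm), fun a => (E a).2.2, fun a => ?_, fun a => ?_⟩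
  · rw [← hE, ← hE]
    simp [shift]
  · beta_reduce
    rw [Equiv.trans_apply, Equiv.trans_apply, Equiv.apply_symm_apply]
    rfl

namespace IsPartition

variable {α : Type*} {s : ℕ} {Y : Fin s → Finset α}

theorem exists_index (hY : IsPartition Y) : ∃ f : α → Fin s, ∀ a j, a ∈ Y j ↔ f a = j := by
  obtain ⟨-, hdisj, hcov⟩ := hY
  choose f hf using hcov
  refine ⟨f, fun a j => ⟨fun ha => ?_, fun h => h ▸ hf a⟩⟩
  by_contra hne
  exact disjoint_left.mp (hdisj _ _ hne) (hf a) ha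

theorem exists_blockwise_shift [Fintype α] [DecidableEq α] (hY : IsPartition Y) {p : ℕ} [NeZero p]
    (hp : ∀ j, p ∣ #(Y j)) :
    ∃ (φ : Perm α) (c : α → ZMod p), (∀ j, (Y j).image φ = Y j) ∧ ∀ a, c (φ a) = c a + 1 := by
  obtain ⟨f, hf⟩ := hY.exists_index
  have hcard : ∀ j, Fintype.card {a // f a = j} = #(Y j) := fun j => by
    rw [Fintype.card_subtype]
    congr 1
    ext a
    simp [hf]
  obtain ⟨φ, c, hφ, hc⟩ := exists_perm_fiberwise_shift f p (fun j => hcard j ▸ hp j)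
  refine ⟨φ, c, fun j => ?_, hc⟩
  ext a
  simp only [mem_image, hf]
  exact ⟨fun ⟨b, hb, hba⟩ => hba ▸ (hφ b).trans hb,
    fun ha => ⟨φ.symm a, (hφ _).symm.trans (by simpa using ha), φ.apply_symm_apply a⟩⟩

theorem image_eq_of_support_subset [Fintype α] [DecidableEq α] (hY : IsPartition Y)
    {ψ : Perm α} {j₀ : Fin s} (hψ : ψ.support ⊆ Y j₀) (j : Fin s) : (Y j).image ψ = Y j := by
  obtain rfl | hj := eq_or_ne j j₀
  · exact (map_eq_image _ _).symm.trans (map_perm fun a ha => hψ (Perm.mem_support.mpr ha))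
  · conv_rhs => rw [← image_id (s := Y j)]
    refine image_congr fun a ha => Perm.notMem_support.mp fun h => ?_
    exact disjoint_left.mp (hY.2.1 _ _ hj) ha (hψ h)

end IsPartition

theorem exists_pref_top {n : ℕ} (A : Finset (Fin n)) :
    ∃ q : Pref n, ∀ a ∈ A, ∀ x ∉ A, prefGT q a x := by
  let σ : Fin n ≃ Fin n := (sumCompl (· ∈ A)).symm.trans
    ((Fintype.equivFin _).sumCongr (Fintype.equivFin _) |>.trans
      (finSumFinEquiv.trans (finCongr (by
        rw [← Fintype.card_sum, Fintype.card_congr (sumCompl _), Fintype.card_fin]))))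
  refine ⟨σ.symm, fun a ha x hx => ?_⟩
  simp only [prefGT, Equiv.symm_symm, Fin.lt_def, σ, Equiv.trans_apply,
    sumCompl_symm_apply_of_pos ha, sumCompl_symm_apply_of_neg hx, Equiv.sumCongr_apply,
    Sum.map_inl, Sum.map_inr, finSumFinEquiv_apply_left, finSumFinEquiv_apply_right,
    finCongr_apply, Fin.val_cast, Fin.val_castAdd, Fin.val_natAdd]
  omega

theorem prefGT_mul_of_support_subset {n : ℕ} {A : Finset (Fin n)} {q : Pref n}
    (hq : ∀ a ∈ A, ∀ x ∉ A, prefGT q a x) {σ : Perm (Fin n)} (hσ : σ.support ⊆ A) {a x : Fin n}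
    (ha : a ∈ A) (hx : x ∉ A) : prefGT (σ * q) a x := by
  have hσx : σ⁻¹ x = x :=
    Perm.notMem_support.mp fun h => hx (hσ (Perm.support_inv σ ▸ h))
  have hσa : σ⁻¹ a ∈ A := by
    by_cases h : a ∈ σ.support
    · exact hσ (by rwa [← Perm.support_inv, Perm.apply_mem_support, Perm.support_inv])
    · rwa [Perm.notMem_support.mp (by rwa [Perm.support_inv])]
  show q.symm (σ⁻¹ a) < q.symm (σ⁻¹ x)
  rw [hσx]
  exact hq _ hσa x hx

theorem notMem_Par_of_forall_prefGT {n h : ℕ} {p : Profile n h} {a x : Fin n} (hax : a ≠ x)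
    (hp : ∀ i, prefGT (p i) a x) : x ∉ Par p := fun hx =>
  let ⟨i, hi⟩ := hx a hax
  lt_asymm hi (hp i)

theorem pact_pow_mul_eq_self {n h p : ℕ} [NeZero p] {φ : Perm (Fin h)} {ψ : Perm (Fin n)}
    (hψ : ψ ^ p = 1) {c : Fin h → ZMod p} (hc : ∀ i, c (φ i) = c i + 1) (q : Pref n) :
    pact φ ψ 1 (fun i => ψ ^ (c i).val * q) = fun i => ψ ^ (c i).val * q := by
  funext i
  obtain ⟨j, rfl⟩ := φ.surjective i
  simp only [pact, Perm.coe_inv, symm_apply_apply, mul_one, hc, pow_val_add_one hψ, mul_assoc]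

theorem image_eq_of_pact_eq {n h s t : ℕ} {Y : Fin s → Finset (Fin h)}
    {Z : Fin t → Finset (Fin n)} {C : SCC n h} (hanon : YAnonymous Y C) (hneut : ZNeutral Z C)
    {φ : Perm (Fin h)} {ψ : Perm (Fin n)} (hφ : ∀ j, (Y j).image φ = Y j)
    (hψ : ∀ k, (Z k).image ψ = Z k) {p : Profile n h} (hp : pact φ ψ 1 p = p) :
    ψ '' C p = C p := by
  have hsplit : pact 1 ψ 1 (pact φ 1 1 p) = pact φ ψ 1 p := by
    funext i
    simp [pact]
  rw [← hanon p φ hφ, ← hneut _ ψ hψ, hsplit, hp, hanon p φ hφ]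

theorem statement0_general {h n s t : ℕ}
    (Y : Fin s → Finset (Fin h)) (hY : IsPartition Y)
    (Z : Fin t → Finset (Fin n)) (hZ : IsPartition Z)
    (kstar : Fin t)
    (C : SCC n h) (hres : Resolute C) (href : Refines C Par)
    (hanon : YAnonymous Y C) (hneut : ZNeutral Z C) :
    Nat.gcd (Finset.univ.gcd fun j => (Y j).card) (Nat.factorial (Z kstar).card) = 1 := by
  classical
  by_contra hgcd
  obtain ⟨p, hp, hpdvd⟩ := Nat.exists_prime_and_dvd hgcd
  have : NeZero p := ⟨hp.ne_zero⟩
  have hpY : ∀ j, p ∣ #(Y j) := fun j =>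
    (hpdvd.trans (Nat.gcd_dvd_left _ _)).trans (Finset.gcd_dvd (mem_univ j))
  have hpZ : p ≤ #(Z kstar) := hp.dvd_factorial.mp (hpdvd.trans (Nat.gcd_dvd_right _ _))
  obtain ⟨A, hAZ, hAcard⟩ := exists_subset_card_eq hpZ
  obtain ⟨ψ, hψA, hψsupp⟩ := A.exists_cycleOn
  have hψp : ψ ^ p = 1 := hAcard ▸ hψA.pow_card_eq_one hψsupp
  obtain ⟨φ, c, hφY, hc⟩ := hY.exists_blockwise_shift hpY
  obtain ⟨q, hq⟩ := exists_pref_top A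
  obtain ⟨x, hx⟩ := hres fun i => ψ ^ (c i).val * q
  have hψx : ψ x = x := by
    have := image_eq_of_pact_eq hanon hneut hφY (hZ.image_eq_of_support_subset (hψsupp.trans hAZ))
      (pact_pow_mul_eq_self hψp hc q)
    rwa [hx, Set.image_singleton, Set.singleton_eq_singleton_iff] at this
  have hxA : x ∉ A := fun hxA =>
    hψA.apply_ne (one_lt_card_iff_nontrivial.mp (hAcard ▸ hp.one_lt)) hxA hψx
  obtain ⟨a, ha⟩ := card_pos.mp (hAcard ▸ hp.pos)
  exact notMem_Par_of_forall_prefGT (ne_of_mem_of_not_mem ha hxA)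
    (fun i => prefGT_mul_of_support_subset hq ((Perm.support_pow_le ψ _).trans hψsupp) ha hxA)
    (href _ (hx ▸ Set.mem_singleton x))

/-- Theorem `super`(i): if the Pareto scc admits a resolute refinement
which is `Y`-anonymous and `Z`-neutral, then
`gcd(gcd(|Y_1|,…,|Y_s|), (|Z_{k*}|)!) = 1`. -/
theorem statement0 {h n s t : ℕ} (hh : 2 ≤ h) (hn : 2 ≤ n)
    (Y : Fin s → Finset (Fin h)) (hY : IsPartition Y)
    (Z : Fin t → Finset (Fin n)) (hZ : IsPartition Z)
    (kstar : Fin t) (hks : ∀ k, (Z k).card ≤ (Z kstar).card)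
    (C : SCC n h) (hres : Resolute C) (href : Refines C Par)
    (hanon : YAnonymous Y C) (hneut : ZNeutral Z C) :
    Nat.gcd (Finset.univ.gcd fun j => (Y j).card) (Nat.factorial (Z kstar).card) = 1 :=
  statement0_general Y hY Z hZ kstar C hres href hanon hneut
end

section
/- Let Y = {Y_1,…,Y_s} be a partition of H and Z = {Z_1,…,Z_t} be a partition of N, with Z_{k*} a block of Z of maximal size. If C is a social choice correspondence which is Y-anonymous and Z-neutral, and gcd( gcd(|Y_1|,…,|Y_s|), (|Z_{k*}|)! ) = 1, then C admits a resolute refinement which is Y-anonymous and Z-neutral. -/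
section AuxOrbit
open Function

lemma perm_mem_periodicPts {α : Type*} [Fintype α] [DecidableEq α] (σ : Equiv.Perm α) (x : α) :
    x ∈ Function.periodicPts σ := by
  refine ⟨orderOf σ, orderOf_pos σ, ?_⟩
  show σ^[orderOf σ] x = x
  rw [Equiv.Perm.iterate_eq_pow, pow_orderOf_eq_one]; rfl

/-- The orbit of `x` under the permutation `σ` as a `Finset`. -/
noncomputable def porb {α : Type*} [DecidableEq α] (σ : Equiv.Perm α) (x : α) : Finset α :=
  (Finset.range (Function.minimalPeriod σ x)).image (fun m => σ^[m] x)

lemma porb_card {α : Type*} [Fintype α] [DecidableEq α] (σ : Equiv.Perm α) (x : α) :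
    (porb σ x).card = Function.minimalPeriod σ x := by
  rw [porb, Finset.card_image_of_injOn, Finset.card_range]
  have := Function.iterate_injOn_Iio_minimalPeriod (f := ⇑σ) (x := x)
  simpa [Finset.coe_range] using this

lemma mem_porb_self {α : Type*} [Fintype α] [DecidableEq α] (σ : Equiv.Perm α) (x : α) :
    x ∈ porb σ x := by
  have hpos := Function.minimalPeriod_pos_of_mem_periodicPts (perm_mem_periodicPts σ x)
  exact Finset.mem_image.2 ⟨0, Finset.mem_range.2 hpos, rfl⟩

lemma apply_mem_porb {α : Type*} [Fintype α] [DecidableEq α] {σ : Equiv.Perm α} {x a : α}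
    (ha : a ∈ porb σ x) : σ a ∈ porb σ x := by
  obtain ⟨m, hm, rfl⟩ := Finset.mem_image.1 ha
  rw [Finset.mem_range] at hm
  have : σ (σ^[m] x) = σ^[m+1] x := by rw [Function.iterate_succ_apply']
  rcases eq_or_lt_of_le (Nat.succ_le_of_lt hm) with he | hl
  · have he' : m + 1 = Function.minimalPeriod (⇑σ) x := he
    have hper : σ^[m+1] x = x := by
      rw [he']; exact Function.isPeriodicPt_minimalPeriod (⇑σ) x
    rw [this, hper]; exact mem_porb_self σ x
  · rw [this]; exact Finset.mem_image.2 ⟨m+1, Finset.mem_range.2 hl, rfl⟩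

lemma porb_subset {α : Type*} [Fintype α] [DecidableEq α] {σ : Equiv.Perm α} {S : Finset α}
    (hS : S.image σ = S) {x : α} (hx : x ∈ S) : porb σ x ⊆ S := by
  have hstep : ∀ a ∈ S, σ a ∈ S := by
    intro a ha; rw [← hS]; exact Finset.mem_image_of_mem _ ha
  have key : ∀ m : ℕ, σ^[m] x ∈ S := by
    intro m
    induction m with
    | zero => exact hx
    | succ m ih => rw [Function.iterate_succ_apply']; exact hstep _ ih
  intro a ha
  obtain ⟨m, -, rfl⟩ := Finset.mem_image.1 ha
  exact key m

lemma image_porb {α : Type*} [Fintype α] [DecidableEq α] (σ : Equiv.Perm α) (x : α) :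
    (porb σ x).image σ = porb σ x := by
  apply Finset.eq_of_subset_of_card_le
  · intro a ha
    obtain ⟨b, hb, rfl⟩ := Finset.mem_image.1 ha
    exact apply_mem_porb hb
  · rw [Finset.card_image_of_injective _ σ.injective]

lemma minimalPeriod_le_card {α : Type*} [Fintype α] [DecidableEq α] (σ : Equiv.Perm α)
    {S : Finset α} (hS : S.image σ = S) {x : α} (hx : x ∈ S) :
    Function.minimalPeriod σ x ≤ S.card := by
  rw [← porb_card σ x]
  exact Finset.card_le_card (porb_subset hS hx)

lemma dvd_card_of_invariant {α : Type*} [Fintype α] [DecidableEq α] (σ : Equiv.Perm α) {d : ℕ}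
    (hd : ∀ x, d ∣ Function.minimalPeriod σ x) (S : Finset α) (hS : S.image σ = S) :
    d ∣ S.card := by
  induction S using Finset.strongInduction with
  | _ S ih =>
    rcases S.eq_empty_or_nonempty with rfl | ⟨x, hx⟩
    · simp
    · have hOsub : porb σ x ⊆ S := porb_subset hS hx
      have hinv : (S \ porb σ x).image σ = S \ porb σ x := by
        rw [Finset.image_sdiff _ _ σ.injective, hS, image_porb]
      have hssub : S \ porb σ x ⊂ S :=
        Finset.sdiff_ssubset hOsub ⟨x, mem_porb_self σ x⟩
      have h1 : d ∣ (S \ porb σ x).card := ih _ hssub hinv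
      have h2 : (S \ porb σ x).card + (porb σ x).card = S.card :=
        Finset.card_sdiff_add_card_eq_card hOsub
      rw [← h2]
      exact Nat.dvd_add h1 (by rw [porb_card]; exact hd x)

end AuxOrbit

section AuxPact

variable {n h : ℕ}

lemma pact_mul (φ₂ φ₁ : Equiv.Perm (Fin h)) (ψ₂ ψ₁ : Equiv.Perm (Fin n)) (p : Profile n h) :
    pact φ₂ ψ₂ 1 (pact φ₁ ψ₁ 1 p) = pact (φ₂ * φ₁) (ψ₂ * ψ₁) 1 p := by
  funext i
  simp [pact, mul_assoc]

lemma pact_one (p : Profile n h) : pact 1 1 1 p = p := by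
  funext i; simp [pact]

lemma good_inv {β ι : Type*} [DecidableEq β] {B : ι → Finset β} {g : Equiv.Perm β}
    (hg : ∀ j, (B j).image g = B j) : ∀ j, (B j).image ⇑g⁻¹ = B j := by
  intro j
  conv_lhs => rw [← hg j]
  rw [Finset.image_image]
  have hid : ⇑g⁻¹ ∘ ⇑g = id := by funext x; simp
  rw [hid, Finset.image_id]

lemma good_mul {β ι : Type*} [DecidableEq β] {B : ι → Finset β} {g g' : Equiv.Perm β}
    (hg : ∀ j, (B j).image g = B j) (hg' : ∀ j, (B j).image g' = B j) :
    ∀ j, (B j).image ⇑(g * g') = B j := by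
  intro j
  rw [show ⇑(g * g') = ⇑g ∘ ⇑g' from rfl, ← Finset.image_image, hg' j, hg j]

lemma rigidity {h n s t : ℕ} (Y : Fin s → Finset (Fin h)) (Z : Fin t → Finset (Fin n))
    (hZcov : ∀ a : Fin n, ∃ k, a ∈ Z k) (kstar : Fin t)
    (hks : ∀ k, (Z k).card ≤ (Z kstar).card)
    (hgcd : Nat.gcd (Finset.univ.gcd fun j => (Y j).card) (Nat.factorial (Z kstar).card) = 1)
    {φ : Equiv.Perm (Fin h)} {ψ : Equiv.Perm (Fin n)}
    (hφ : ∀ j, (Y j).image φ = Y j) (hψ : ∀ k, (Z k).image ψ = Z k)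
    {r : Profile n h} (hr : pact φ ψ 1 r = r) : ψ = 1 := by
  have hbase : ∀ i, ψ * r (φ⁻¹ i) = r i := by
    intro i
    have := congrFun hr i
    simpa [pact] using this
  have key : ∀ (m : ℕ) (i : Fin h), ψ ^ m * r ((φ⁻¹ ^ m) i) = r i := by
    intro m
    induction m with
    | zero => intro i; simp
    | succ m ih =>
      intro i
      rw [pow_succ, pow_succ', mul_assoc, Equiv.Perm.mul_apply, hbase, ih]
  set d := orderOf ψ with hd
  have hdvdY : ∀ i : Fin h, d ∣ Function.minimalPeriod (⇑φ⁻¹) i := by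
    intro i
    have hper : (φ⁻¹ ^ Function.minimalPeriod (⇑φ⁻¹) i) i = i := by
      have := Function.isPeriodicPt_minimalPeriod (⇑φ⁻¹) i
      rwa [Function.IsPeriodicPt, Function.IsFixedPt, Equiv.Perm.iterate_eq_pow] at this
    have hkey := key (Function.minimalPeriod (⇑φ⁻¹) i) i
    rw [hper] at hkey
    have hpow : ψ ^ Function.minimalPeriod (⇑φ⁻¹) i = 1 := by
      have h1 : ψ ^ Function.minimalPeriod (⇑φ⁻¹) i * r i = 1 * r i := by
        rw [hkey, one_mul]
      exact mul_right_cancel h1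
    exact orderOf_dvd_of_pow_eq_one hpow
  have hdY : d ∣ Finset.univ.gcd fun j => (Y j).card :=
    Finset.dvd_gcd fun j _ => dvd_card_of_invariant φ⁻¹ hdvdY (Y j) (good_inv hφ j)
  have hdF : d ∣ Nat.factorial (Z kstar).card := by
    apply orderOf_dvd_of_pow_eq_one
    refine Equiv.ext fun x => ?_
    obtain ⟨k, hk⟩ := hZcov x
    have hle : Function.minimalPeriod (⇑ψ) x ≤ (Z kstar).card :=
      le_trans (minimalPeriod_le_card ψ (hψ k) hk) (hks k)
    have hpos : 0 < Function.minimalPeriod (⇑ψ) x :=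
      Function.minimalPeriod_pos_of_mem_periodicPts (perm_mem_periodicPts ψ x)
    have hdvd : Function.minimalPeriod (⇑ψ) x ∣ Nat.factorial (Z kstar).card :=
      Nat.dvd_factorial hpos hle
    have hpp : Function.IsPeriodicPt (⇑ψ) (Nat.factorial (Z kstar).card) x :=
      Function.isPeriodicPt_iff_minimalPeriod_dvd.2 hdvd
    simpa [Function.IsPeriodicPt, Function.IsFixedPt, Equiv.Perm.iterate_eq_pow] using hpp
  have hone : d ∣ 1 := hgcd ▸ Nat.dvd_gcd hdY hdF
  exact orderOf_eq_one_iff.1 (Nat.dvd_one.1 hone)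

end AuxPact

/-- The equivalence relation on profiles generated by the joint action of `V(Y) × W(Z)`. -/
def prel {n h s t : ℕ} (Y : Fin s → Finset (Fin h)) (Z : Fin t → Finset (Fin n))
    (p q : Profile n h) : Prop :=
  ∃ (φ : Equiv.Perm (Fin h)) (ψ : Equiv.Perm (Fin n)),
    (∀ j, (Y j).image ⇑φ = Y j) ∧ (∀ k, (Z k).image ⇑ψ = Z k) ∧ q = pact φ ψ 1 p

lemma prel_equiv {n h s t : ℕ} (Y : Fin s → Finset (Fin h)) (Z : Fin t → Finset (Fin n)) :
    Equivalence (prel Y Z) := by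
  constructor
  · intro p
    exact ⟨1, 1, fun j => by simp, fun k => by simp, (pact_one p).symm⟩
  · rintro p q ⟨φ, ψ, hφ, hψ, rfl⟩
    exact ⟨φ⁻¹, ψ⁻¹, good_inv hφ, good_inv hψ, by rw [pact_mul]; simp [pact_one]⟩
  · rintro p q r ⟨φ, ψ, hφ, hψ, rfl⟩ ⟨φ', ψ', hφ', hψ', rfl⟩
    exact ⟨φ' * φ, ψ' * ψ, good_mul hφ' hφ, good_mul hψ' hψ, (pact_mul φ' φ ψ' ψ p).symm⟩

/-- The setoid on profiles associated with the partitions `Y` and `Z`. -/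
def psetoid {n h s t : ℕ} (Y : Fin s → Finset (Fin h)) (Z : Fin t → Finset (Fin n)) :
    Setoid (Profile n h) :=
  ⟨prel Y Z, prel_equiv Y Z⟩

/-- Theorem `super-super`(i): if `C` is a `Y`-anonymous and `Z`-neutral
scc and `gcd(gcd(|Y_1|,…,|Y_s|), (|Z_{k*}|)!) = 1`, then `C` admits a resolute
refinement which is `Y`-anonymous and `Z`-neutral. -/
theorem statement2 {h n s t : ℕ} (hh : 2 ≤ h) (hn : 2 ≤ n)
    (Y : Fin s → Finset (Fin h)) (hY : IsPartition Y)
    (Z : Fin t → Finset (Fin n)) (hZ : IsPartition Z)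
    (kstar : Fin t) (hks : ∀ k, (Z k).card ≤ (Z kstar).card)
    (C : SCC n h) (hC : IsSCC C) (hanon : YAnonymous Y C) (hneut : ZNeutral Z C)
    (hgcd : Nat.gcd (Finset.univ.gcd fun j => (Y j).card)
      (Nat.factorial (Z kstar).card) = 1) :
    ∃ f : SCC n h, Resolute f ∧ Refines f C ∧ YAnonymous Y f ∧ ZNeutral Z f := by
  classical
  set s' := psetoid Y Z with hs'
  set rep : Profile n h → Profile n h := fun p => (Quotient.mk s' p).out with hrepdef
  have hrep : ∀ p, ∃ (φ : Equiv.Perm (Fin h)) (ψ : Equiv.Perm (Fin n)),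
      (∀ j, (Y j).image ⇑φ = Y j) ∧ (∀ k, (Z k).image ⇑ψ = Z k) ∧
      p = pact φ ψ 1 (rep p) := by
    intro p
    exact Quotient.exact (Quotient.out_eq (Quotient.mk s' p))
  have hrepeq : ∀ {p q : Profile n h}, prel Y Z p q → rep p = rep q := by
    intro p q hpq
    show (Quotient.mk s' p).out = (Quotient.mk s' q).out
    rw [Quotient.sound (s := s') hpq]
  choose x₀ hx₀ using hC
  choose φp ψp hφp hψp hp using hrep
  have hCeq : ∀ (p : Profile n h) (φ : Equiv.Perm (Fin h)) (ψ : Equiv.Perm (Fin n)),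
      (∀ j, (Y j).image ⇑φ = Y j) → (∀ k, (Z k).image ⇑ψ = Z k) →
      C (pact φ ψ 1 p) = ψ '' C p := by
    intro p φ ψ hφ hψ
    have hsplit : pact φ ψ 1 p = pact 1 ψ 1 (pact φ 1 1 p) := by
      funext i; simp [pact]
    rw [hsplit, hneut _ ψ hψ, hanon p φ hφ]
  have huniq : ∀ (p : Profile n h) (φ : Equiv.Perm (Fin h)) (ψ : Equiv.Perm (Fin n)),
      (∀ j, (Y j).image ⇑φ = Y j) → (∀ k, (Z k).image ⇑ψ = Z k) →
      p = pact φ ψ 1 (rep p) → ψ = ψp p := by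
    intro p φ ψ hφ hψ hpe
    have h5 : pact φ ψ 1 (rep p) = pact (φp p) (ψp p) 1 (rep p) := by
      rw [← hpe]; exact hp p
    have h3 : pact ((φp p)⁻¹ * φ) ((ψp p)⁻¹ * ψ) 1 (rep p) = rep p := by
      rw [← pact_mul, h5, pact_mul]
      simp [pact_one]
    have h4 := rigidity Y Z hZ.2.2 kstar hks hgcd (good_mul (good_inv (hφp p)) hφ)
      (good_mul (good_inv (hψp p)) hψ) h3
    exact (inv_mul_eq_one.1 h4).symm
  refine ⟨fun p => {ψp p (x₀ (rep p))}, fun p => ⟨_, rfl⟩, ?_, ?_, ?_⟩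
  · -- Refines
    intro p x hx
    simp only [Set.mem_singleton_iff] at hx
    subst hx
    have hCp : C p = ψp p '' C (rep p) := by
      conv_lhs => rw [hp p]
      exact hCeq (rep p) (φp p) (ψp p) (hφp p) (hψp p)
    rw [hCp]
    exact ⟨x₀ (rep p), hx₀ (rep p), rfl⟩
  · -- YAnonymous
    intro p φ hφ
    have hq : prel Y Z p (pact φ 1 1 p) := ⟨φ, 1, hφ, fun k => by simp, rfl⟩
    have hre : rep (pact φ 1 1 p) = rep p := (hrepeq hq).symm
    have hqe : pact φ 1 1 p = pact (φ * φp p) (1 * ψp p) 1 (rep (pact φ 1 1 p)) := by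
      rw [hre]
      conv_lhs => rw [hp p]
      rw [pact_mul]
    have h6 := huniq (pact φ 1 1 p) (φ * φp p) (1 * ψp p)
      (good_mul hφ (hφp p)) (good_mul (fun k => by simp) (hψp p)) hqe
    show {ψp (pact φ 1 1 p) (x₀ (rep (pact φ 1 1 p)))} = {ψp p (x₀ (rep p))}
    rw [hre, ← h6, one_mul]
  · -- ZNeutral
    intro p ψ hψ
    have hq : prel Y Z p (pact 1 ψ 1 p) := ⟨1, ψ, fun j => by simp, hψ, rfl⟩
    have hre : rep (pact 1 ψ 1 p) = rep p := (hrepeq hq).symm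
    have hqe : pact 1 ψ 1 p = pact (1 * φp p) (ψ * ψp p) 1 (rep (pact 1 ψ 1 p)) := by
      rw [hre]
      conv_lhs => rw [hp p]
      rw [pact_mul]
    have h6 := huniq (pact 1 ψ 1 p) (1 * φp p) (ψ * ψp p)
      (good_mul (fun j => by simp) (hφp p)) (good_mul hψ (hψp p)) hqe
    show {ψp (pact 1 ψ 1 p) (x₀ (rep (pact 1 ψ 1 p)))} = ψ '' {ψp p (x₀ (rep p))}
    rw [hre, ← h6, Set.image_singleton]
    rfl
end

section
/- Let Y = {Y_1,…,Y_s} be a partition of H and Z = {Z_1,…,Z_t} be a partition of N, with Z_{k*} a block of Z of maximal size. If C is a social choice correspondence which is Y-anonymous, Z-neutral and immune to the reversal bias, and gcd( gcd(|Y_1|,…,|Y_s|), lcm((|Z_{k*}|)!, 2) ) = 1, then C admits a resolute refinement which is Y-anonymous, Z-neutral and immune to the reversal bias. -/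
/-!
`G = V(Y) × W(Z)` acts on profiles, commuting with reversal, and `C` is `G`-equivariant. The
gcd condition makes this action rigid. If `(φ, ψ)` fixes a profile, then `ψ ^ k = 1` whenever
`φ ^ k` fixes an individual, so the order of `ψ` divides every `|Y_j|` as well as `|Z_{k*}|!`,
and `ψ = 1`. If `(φ, ψ)` reverses a profile, then `ψ² = 1`, and an odd cycle of `φ` (one exists
as the gcd is odd) shows that `ψ` is conjugate to `ρ₀`, so it fixes at most one alternative.

A resolute refinement is then obtained by choosing, for a representative `q` of each pair of
orbits `{G • q, G • ρ₀q}`, values `x ∈ C q` and `x' ∈ C (ρ₀q)` with `x ≠ x'` (by immunity; `x'`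
is the image of `x` when the two orbits coincide) and transporting them along `G`; rigidity
makes this well defined.
-/

open MulAction Equiv Finset Function
open scoped Pointwise

theorem Set.exists_mem_mem_ne_of_forall_eq_singleton_ne {β : Type*} {A B : Set β}
    (hA : A.Nonempty) (hB : B.Nonempty) (hAB : ∀ x, A = {x} → B ≠ A) :
    ∃ a ∈ A, ∃ b ∈ B, a ≠ b := by
  by_contra! hall
  obtain ⟨a, ha⟩ := hA
  obtain ⟨b, hb⟩ := hB
  have hA' : A = {a} := Set.eq_singleton_iff_unique_mem.2
    ⟨ha, fun a' ha' => (hall a' ha' b hb).trans (hall a ha b hb).symm⟩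
  have hB' : B = {a} := Set.eq_singleton_iff_unique_mem.2
    ⟨hall a ha b hb ▸ hb, fun b' hb' => (hall a ha b' hb').symm⟩
  exact hAB a hA' (hB'.trans hA'.symm)

section EquivariantSelection

variable {G α β : Type*} [Group G] [MulAction G α] {ψ : G →* Perm β} {ι : α → α}

theorem map_eq_of_smul_eq (hfree : ∀ a : α, stabilizer G a ≤ ψ.ker) {g g' : G} {a : α}
    (h : g • a = g' • a) : ψ g = ψ g' := by
  have : ψ (g'⁻¹ * g) = 1 := hfree a (by rw [mem_stabilizer_iff, mul_smul, h, inv_smul_smul])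
  rwa [map_mul, map_inv, inv_mul_eq_one, eq_comm] at this

theorem pow_two_smul_eq_self_of_smul_eq (hι : ∀ (g : G) (a : α), ι (g • a) = g • ι a)
    (hιι : Involutive ι) {g : G} {a : α} (h : g • a = ι a) : g ^ 2 • a = a := by
  rw [pow_two, mul_smul, h, ← hι, h, hιι]

theorem exists_mem_mem_ne_of_immune {C : α → Set β} (hC : ∀ a, (C a).Nonempty)
    (hCsmul : ∀ (g : G) (a : α), C (g • a) = ψ g '' C a)
    (himm : ∀ a x, C a = {x} → C (ι a) ≠ C a)
    (hfree : ∀ a : α, stabilizer G a ≤ ψ.ker)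
    (hflip : ∀ (g : G) (a : α), g • a = ι a → (fixedPoints (ψ g)).Subsingleton)
    (q : α) :
    ∃ x ∈ C q, ∃ x' ∈ C (ι q), x ≠ x' ∧ ∀ g : G, g • q = ι q → ψ g x = x' := by
  by_cases hpaired : ∃ g₀ : G, g₀ • q = ι q
  · obtain ⟨g₀, hg₀⟩ := hpaired
    obtain ⟨x, hx, hmoved⟩ : ∃ x ∈ C q, ψ g₀ x ≠ x := by
      by_contra! hfix
      obtain ⟨a, ha⟩ := hC q
      have hCq : C q = {a} := Set.eq_singleton_iff_unique_mem.2
        ⟨ha, fun b hb => hflip g₀ q hg₀ (hfix b hb) (hfix a ha)⟩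
      refine himm q a hCq ?_
      rw [← hg₀, hCsmul, hCq, Set.image_singleton, hfix a ha]
    refine ⟨x, hx, ψ g₀ x, hg₀ ▸ hCsmul g₀ q ▸ Set.mem_image_of_mem _ hx, hmoved.symm,
      fun g hg => ?_⟩
    rw [map_eq_of_smul_eq hfree (hg.trans hg₀.symm)]
  · push Not at hpaired
    obtain ⟨x, hx, x', hx', hne⟩ :=
      Set.exists_mem_mem_ne_of_forall_eq_singleton_ne (hC q) (hC (ι q)) (himm q)
    exact ⟨x, hx, x', hx', hne, fun g hg => absurd hg (hpaired g)⟩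

variable (ψ ι) in
def OrbitTransport (q : α) (x x' : β) (a : α) (v : β) : Prop :=
  ∃ g : G, (g • q = a ∧ ψ g x = v) ∨ (g • ι q = a ∧ ψ g x' = v)

namespace OrbitTransport

variable {q : α} {x x' : β} {a : α} {v w : β}

theorem exists_of_mem_orbit (ha : a ∈ orbit G q ∨ a ∈ orbit G (ι q)) :
    ∃ v, OrbitTransport ψ ι q x x' a v := by
  rcases ha with ⟨g, hg⟩ | ⟨g, hg⟩
  · exact ⟨_, g, .inl ⟨hg, rfl⟩⟩
  · exact ⟨_, g, .inr ⟨hg, rfl⟩⟩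

theorem mem {C : α → Set β} (hCsmul : ∀ (g : G) (a : α), C (g • a) = ψ g '' C a)
    (hx : x ∈ C q) (hx' : x' ∈ C (ι q)) (h : OrbitTransport ψ ι q x x' a v) : v ∈ C a := by
  rcases h with ⟨g, ⟨rfl, rfl⟩ | ⟨rfl, rfl⟩⟩
  · exact hCsmul g q ▸ Set.mem_image_of_mem _ hx
  · exact hCsmul g (ι q) ▸ Set.mem_image_of_mem _ hx'

theorem smul (h : OrbitTransport ψ ι q x x' a v) (g : G) :
    OrbitTransport ψ ι q x x' (g • a) (ψ g v) := by
  rcases h with ⟨g', ⟨rfl, rfl⟩ | ⟨rfl, rfl⟩⟩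
  · exact ⟨g * g', .inl ⟨mul_smul .., by simp⟩⟩
  · exact ⟨g * g', .inr ⟨mul_smul .., by simp⟩⟩

theorem involution (hι : ∀ (g : G) (a : α), ι (g • a) = g • ι a) (hιι : Involutive ι)
    (hne : x ≠ x') (h : OrbitTransport ψ ι q x x' a v) :
    ∃ w, w ≠ v ∧ OrbitTransport ψ ι q x x' (ι a) w := by
  rcases h with ⟨g, ⟨rfl, rfl⟩ | ⟨rfl, rfl⟩⟩
  · exact ⟨ψ g x', fun e => hne ((ψ g).injective e).symm, g, .inr ⟨(hι g q).symm, rfl⟩⟩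
  · exact ⟨ψ g x, fun e => hne ((ψ g).injective e), g, .inl ⟨by rw [hι, hιι], rfl⟩⟩

theorem unique (hfree : ∀ a : α, stabilizer G a ≤ ψ.ker)
    (hcompat : ∀ g : G, g • q = ι q → ψ g x = x')
    (hv : OrbitTransport ψ ι q x x' a v) (hw : OrbitTransport ψ ι q x x' a w) : v = w := by
  have mixed : ∀ g g' : G, g • q = g' • ι q → ψ g x = ψ g' x' := fun g g' h => by
    rw [← hcompat (g'⁻¹ * g) (by rw [mul_smul, h, inv_smul_smul]), map_mul, map_inv]
    simp
  rcases hv with ⟨g, ⟨rfl, rfl⟩ | ⟨rfl, rfl⟩⟩ <;> rcases hw with ⟨g', ⟨hg', rfl⟩ | ⟨hg', rfl⟩⟩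
  · rw [map_eq_of_smul_eq hfree hg']
  · exact mixed g g' hg'.symm
  · exact (mixed g' g hg').symm
  · rw [map_eq_of_smul_eq hfree hg']

end OrbitTransport

theorem exists_orbit_pair_representative (hι : ∀ (g : G) (a : α), ι (g • a) = g • ι a)
    (hιι : Involutive ι) :
    ∃ rep : α → α, (∀ a, a ∈ orbit G (rep a) ∨ a ∈ orbit G (ι (rep a))) ∧
      (∀ (g : G) a, rep (g • a) = rep a) ∧ ∀ a, rep (ι a) = rep a := by
  -- the unordered pair of orbits `{G • a, G • ι a}` is the same for all points of its union
  let key (a : α) : Sym2 (Set α) := s(orbit G a, orbit G (ι a))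
  let rep (a : α) : α := (Quotient.mk (Setoid.ker key) a).out
  have rep_eq {a b : α} (h : key a = key b) : rep a = rep b :=
    congrArg Quotient.out (Quotient.sound h)
  refine ⟨rep, fun a => ?_, fun g a => rep_eq (by simp only [key, hι, orbit_smul]),
    fun a => rep_eq (by simp only [key, hιι a, Sym2.eq_swap])⟩
  have key_rep : key (rep a) = key a := Quotient.mk_out (s := Setoid.ker key) a
  simp only [key, Sym2.eq_iff] at key_rep
  rcases key_rep with ⟨h, -⟩ | ⟨-, h⟩
  · exact .inl (orbit_eq_iff.1 h.symm)
  · exact .inr (orbit_eq_iff.1 h.symm)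

theorem exists_equivariant_selection {C : α → Set β} (hC : ∀ a, (C a).Nonempty)
    (hCsmul : ∀ (g : G) (a : α), C (g • a) = ψ g '' C a)
    (himm : ∀ a x, C a = {x} → C (ι a) ≠ C a)
    (hι : ∀ (g : G) (a : α), ι (g • a) = g • ι a) (hιι : Involutive ι)
    (hfree : ∀ a : α, stabilizer G a ≤ ψ.ker)
    (hflip : ∀ (g : G) (a : α), g • a = ι a → (fixedPoints (ψ g)).Subsingleton) :
    ∃ f : α → β, (∀ a, f a ∈ C a) ∧ (∀ (g : G) a, f (g • a) = ψ g (f a)) ∧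
      ∀ a, f (ι a) ≠ f a := by
  choose x hx x' hx' hne hcompat using
    exists_mem_mem_ne_of_immune hC hCsmul himm hfree hflip
  obtain ⟨rep, mem_orbit_rep, rep_smul, rep_involution⟩ :=
    exists_orbit_pair_representative hι hιι
  choose f hf using fun a => OrbitTransport.exists_of_mem_orbit (ψ := ψ)
    (x := x (rep a)) (x' := x' (rep a)) (mem_orbit_rep a)
  refine ⟨f, fun a => (hf a).mem hCsmul (hx _) (hx' _), fun g a => ?_, fun a => ?_⟩
  · have := hf (g • a)
    rw [rep_smul] at this
    exact OrbitTransport.unique (ι := ι) hfree (hcompat _) this ((hf a).smul g)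
  · obtain ⟨w, hwne, hw⟩ := (hf a).involution hι hιι (hne _)
    have := hf (ι a)
    rw [rep_involution] at this
    rwa [OrbitTransport.unique hfree (hcompat _) this hw]

end EquivariantSelection

namespace Equiv.Perm

variable {α : Type*}

theorem dvd_card_of_forall_dvd_minimalPeriod [Fintype α] (σ : Perm α) {d : ℕ}
    (hd : ∀ x, d ∣ minimalPeriod σ x) : d ∣ Fintype.card α := by
  classical
  rw [Fintype.card_congr (selfEquivSigmaOrbits (Subgroup.zpowers σ) α), Fintype.card_sigma]
  exact Finset.dvd_sum fun ω _ => minimalPeriod_eq_card (a := σ) (b := ω.out) ▸ hd ω.out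

variable [DecidableEq α]

theorem dvd_card_of_mem_stabilizer {σ : Perm α} {s : Finset α}
    (hσ : σ ∈ stabilizer (Perm α) s) {d : ℕ} (hd : ∀ x ∈ s, ∀ k, (σ ^ k) x = x → d ∣ k) :
    d ∣ #s := by
  rw [← Fintype.card_coe]
  let τ := σ.subtypePerm (mem_stabilizer_finset.1 hσ)
  refine dvd_card_of_forall_dvd_minimalPeriod τ fun x => hd x x.2 _ ?_
  have := congrArg Subtype.val (iterate_minimalPeriod (f := τ) (x := x))
  rwa [← coe_pow, subtypePerm_pow] at this

theorem pow_factorial_card_apply_eq_self {σ : Perm α} {s : Finset α}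
    (hσ : σ ∈ stabilizer (Perm α) s) {x : α} (hx : x ∈ s) : (σ ^ (#s).factorial) x = x := by
  have := congrArg (fun τ : Perm s => (τ ⟨x, hx⟩ : α))
    (pow_card_eq_one (x := σ.subtypePerm (mem_stabilizer_finset.1 hσ)))
  simpa [Fintype.card_perm, subtypePerm_pow] using this

end Equiv.Perm

def blockStabilizer {α ι : Type*} [DecidableEq α] (B : ι → Finset α) : Subgroup (Perm α) :=
  ⨅ i, stabilizer (Perm α) (B i)

section blockStabilizer

variable {α ι : Type*} [DecidableEq α] {B : ι → Finset α} {σ : Perm α}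

theorem mem_blockStabilizer : σ ∈ blockStabilizer B ↔ ∀ i, (B i).image σ = B i := by
  simp [blockStabilizer, Subgroup.mem_iInf, mem_stabilizer_iff, smul_finset_def, Perm.smul_def]

theorem pow_factorial_eq_one_of_mem_blockStabilizer {m : ℕ} (hσ : σ ∈ blockStabilizer B)
    (hcover : ∀ a, ∃ i, a ∈ B i) (hm : ∀ i, #(B i) ≤ m) : σ ^ m.factorial = 1 := by
  ext a
  obtain ⟨i, ha⟩ := hcover a
  obtain ⟨c, hc⟩ := Nat.factorial_dvd_factorial (hm i)
  rw [hc, pow_mul]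
  exact Perm.pow_apply_eq_self_of_apply_eq_self
    (Perm.pow_factorial_card_apply_eq_self (Subgroup.mem_iInf.1 hσ i) ha) c

theorem dvd_gcd_card_of_mem_blockStabilizer [Fintype ι] (hσ : σ ∈ blockStabilizer B) {d : ℕ}
    (hd : ∀ x k, (σ ^ k) x = x → d ∣ k) : d ∣ univ.gcd fun i => #(B i) :=
  Finset.dvd_gcd fun i _ =>
    Perm.dvd_card_of_mem_stabilizer (Subgroup.mem_iInf.1 hσ i) fun x _ => hd x

end blockStabilizer

theorem Fin.eq_of_rev_eq_self {n : ℕ} {a b : Fin n} (ha : a.rev = a) (hb : b.rev = b) :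
    a = b := by
  rw [Fin.ext_iff, Fin.val_rev] at ha hb
  omega

instance {n h : ℕ} : MulAction (Perm (Fin h) × Perm (Fin n)) (Profile n h) where
  smul g p := pact g.1 g.2 1 p
  one_smul p := funext fun i => show pact 1 1 1 p i = p i by simp [pact]
  mul_smul g g' p := funext fun i =>
    show pact (g.1 * g'.1) (g.2 * g'.2) 1 p i = pact g.1 g.2 1 (pact g'.1 g'.2 1 p) i by
      simp [pact, mul_assoc]

section Profile

variable {n h : ℕ}

theorem profile_smul_apply (g : Perm (Fin h) × Perm (Fin n)) (p : Profile n h) (i : Fin h) :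
    (g • p) i = g.2 * p (g.1⁻¹ i) :=
  mul_one _

theorem revProfile_smul (g : Perm (Fin h) × Perm (Fin n)) (p : Profile n h) :
    revProfile (g • p) = g • revProfile p := by
  funext i
  simp [revProfile, profile_smul_apply, mul_assoc]

theorem rho0_mul_self (n : ℕ) : rho0 n * rho0 n = 1 := by
  ext
  simp [rho0]

theorem revProfile_involutive : Involutive (revProfile (n := n) (h := h)) := fun p => by
  funext i
  simp [revProfile, mul_assoc, rho0_mul_self]

theorem pow_smul_apply_of_pow_apply_eq_self (g : Perm (Fin h) × Perm (Fin n)) (p : Profile n h)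
    {k : ℕ} {i : Fin h} (hi : (g.1 ^ k) i = i) : (g ^ k • p) i = g.2 ^ k * p i := by
  rw [profile_smul_apply, Prod.pow_fst, Prod.pow_snd, Perm.inv_eq_iff_eq.2 hi.symm]

variable {s : ℕ} {Y : Fin s → Finset (Fin h)} {g : Perm (Fin h) × Perm (Fin n)}
  {p : Profile n h}

theorem apply_smul_eq_image {t : ℕ} {Z : Fin t → Finset (Fin n)} {C : SCC n h}
    (hanon : YAnonymous Y C) (hneut : ZNeutral Z C) (hφ : g.1 ∈ blockStabilizer Y)
    (hψ : g.2 ∈ blockStabilizer Z) (p : Profile n h) : C (g • p) = g.2 '' C p := by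
  have : g • p = pact 1 g.2 1 (pact g.1 1 1 p) :=
    mul_smul ((1, g.2) : Perm (Fin h) × Perm (Fin n)) (g.1, 1) p
  rw [this, hneut _ _ (mem_blockStabilizer.1 hψ), hanon _ _ (mem_blockStabilizer.1 hφ)]

theorem snd_eq_one_of_smul_eq_self {m : ℕ} (hg : g.1 ∈ blockStabilizer Y) (hpow : g.2 ^ m = 1)
    (hcop : Nat.Coprime (univ.gcd fun j => #(Y j)) m) (hp : g • p = p) : g.2 = 1 := by
  have hgcd : orderOf g.2 ∣ univ.gcd fun j => #(Y j) :=
    dvd_gcd_card_of_mem_blockStabilizer hg fun i k hi => orderOf_dvd_of_pow_eq_one <| by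
      have := pow_smul_apply_of_pow_apply_eq_self g p hi
      rwa [(stabilizer _ p).pow_mem hp k, eq_comm, mul_eq_right] at this
  exact orderOf_eq_one_iff.1
    (Nat.eq_one_of_dvd_coprimes hcop hgcd (orderOf_dvd_of_pow_eq_one hpow))

theorem fixedPoints_snd_subsingleton (hg : g.1 ∈ blockStabilizer Y) (hsq : g.2 ^ 2 = 1)
    (hodd : ¬ 2 ∣ univ.gcd fun j => #(Y j)) (hp : g • p = revProfile p) :
    (fixedPoints g.2).Subsingleton := by
  obtain ⟨i, k, hi, hk⟩ : ∃ i k, (g.1 ^ k) i = i ∧ ¬ 2 ∣ k := by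
    by_contra! h
    exact hodd (dvd_gcd_card_of_mem_blockStabilizer hg h)
  obtain ⟨m, rfl⟩ : Odd k := Nat.odd_iff.2 (by omega)
  have hsq_p := pow_two_smul_eq_self_of_smul_eq revProfile_smul revProfile_involutive hp
  -- `g ^ (2m+1) • p = g • p = revProfile p`, and `g.2 ^ (2m+1) = g.2`
  have hconj : g.2 * p i = p i * rho0 n := by
    have := pow_smul_apply_of_pow_apply_eq_self g p hi
    rwa [pow_succ', pow_mul, mul_smul, (stabilizer _ p).pow_mem hsq_p m, hp, pow_succ', pow_mul,
      hsq, one_pow, mul_one, eq_comm] at this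
  have hrev {z : Fin n} (hz : g.2 z = z) : ((p i)⁻¹ z).rev = (p i)⁻¹ z := by
    rw [Perm.eq_inv_iff_eq]
    calc p i ((p i)⁻¹ z).rev = (p i * rho0 n) ((p i)⁻¹ z) := rfl
      _ = z := by simp [← hconj, hz]
  exact fun x hx y hy => (p i)⁻¹.injective (Fin.eq_of_rev_eq_self (hrev hx) (hrev hy))

end Profile

theorem statement3_general {h n s t : ℕ}
    (Y : Fin s → Finset (Fin h))
    (Z : Fin t → Finset (Fin n)) (hZ : IsPartition Z)
    (kstar : Fin t) (hks : ∀ k, (Z k).card ≤ (Z kstar).card)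
    (C : SCC n h) (hC : IsSCC C) (hanon : YAnonymous Y C) (hneut : ZNeutral Z C)
    (himm : Immune C)
    (hgcd : Nat.gcd (Finset.univ.gcd fun j => (Y j).card)
      (Nat.lcm (Nat.factorial (Z kstar).card) 2) = 1) :
    ∃ f : SCC n h, Resolute f ∧ Refines f C ∧ YAnonymous Y f ∧ ZNeutral Z f ∧
      Immune f := by
  let S := (blockStabilizer Y).prod (blockStabilizer Z)
  let ψ : S →* Perm (Fin n) := (MonoidHom.snd _ _).comp S.subtype
  have hCsmul (g : S) (p : Profile n h) : C (g • p) = ψ g '' C p :=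
    apply_smul_eq_image hanon hneut g.2.1 g.2.2 p
  have hrev_smul (g : S) (p : Profile n h) : revProfile (g • p) = g • revProfile p :=
    revProfile_smul _ p
  have hfree (p : Profile n h) : stabilizer S p ≤ ψ.ker := fun g hg =>
    snd_eq_one_of_smul_eq_self g.2.1
      (pow_factorial_eq_one_of_mem_blockStabilizer g.2.2 hZ.2.2 hks)
      (Nat.Coprime.coprime_dvd_right (Nat.dvd_lcm_left _ _) hgcd) hg
  have hflip (g : S) (p : Profile n h) (hp : g • p = revProfile p) :
      (fixedPoints (ψ g)).Subsingleton :=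
    fixedPoints_snd_subsingleton g.2.1
      ((map_pow ψ g 2).symm.trans (MonoidHom.mem_ker.1
        (hfree p (pow_two_smul_eq_self_of_smul_eq hrev_smul revProfile_involutive hp))))
      ((Nat.Prime.coprime_iff_not_dvd Nat.prime_two).1
        (Nat.Coprime.coprime_dvd_right (Nat.dvd_lcm_right _ _) hgcd).symm) hp
  obtain ⟨f, hfC, hfsmul, hfrev⟩ := exists_equivariant_selection hC hCsmul himm
    hrev_smul revProfile_involutive hfree hflip
  refine ⟨fun p => {f p}, fun p => ⟨f p, rfl⟩, fun p => Set.singleton_subset_iff.2 (hfC p),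
    fun p φ hφ => ?_, fun p σ hσ => ?_,
    fun p _ _ => Set.singleton_eq_singleton_iff.not.2 (hfrev p)⟩
  · exact congrArg _ (hfsmul ⟨(φ, 1), mem_blockStabilizer.2 hφ, one_mem _⟩ p)
  · rw [Set.image_singleton]
    exact congrArg _ (hfsmul ⟨(1, σ), one_mem _, mem_blockStabilizer.2 hσ⟩ p)

/-- Theorem `super-super`(ii): if `C` is a `Y`-anonymous, `Z`-neutral scc
immune to the reversal bias and `gcd(gcd(|Y_1|,…,|Y_s|), lcm((|Z_{k*}|)!, 2)) = 1`, then
`C` admits a resolute refinement which is `Y`-anonymous, `Z`-neutral and immune to the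
reversal bias. -/
theorem statement3 {h n s t : ℕ} (hh : 2 ≤ h) (hn : 2 ≤ n)
    (Y : Fin s → Finset (Fin h)) (hY : IsPartition Y)
    (Z : Fin t → Finset (Fin n)) (hZ : IsPartition Z)
    (kstar : Fin t) (hks : ∀ k, (Z k).card ≤ (Z kstar).card)
    (C : SCC n h) (hC : IsSCC C) (hanon : YAnonymous Y C) (hneut : ZNeutral Z C)
    (himm : Immune C)
    (hgcd : Nat.gcd (Finset.univ.gcd fun j => (Y j).card)
      (Nat.lcm (Nat.factorial (Z kstar).card) 2) = 1) :
    ∃ f : SCC n h, Resolute f ∧ Refines f C ∧ YAnonymous Y f ∧ ZNeutral Z f ∧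
      Immune f :=
  statement3_general Y Z hZ kstar hks C hC hanon hneut himm hgcd
end

section
/- The Pareto social choice correspondence Par admits an anonymous and neutral resolute refinement if and only if gcd(h, n!) = 1. -/
/-!
Let `(φ, ψ)` act on profiles by renaming individuals by `φ` and alternatives by `ψ`. For a
resolute, anonymous and neutral `C`, any `(φ, ψ)` fixing a profile `q` satisfies
`C q = ψ '' C q`, so `ψ` fixes the alternative chosen at `q`.

If a prime `p` divides `h` and `n!`, then `p ≤ n`; let `ψ` be the cycle `(0 1 … p-1)` and let
individual `i` hold the order `ψ ^ i`. Rotating the individuals and applying `ψ` fixes this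
profile, yet `0` unanimously beats every alternative that `ψ` fixes.

Conversely, `(φ, ψ) • q = q` means `q (φ i) = ψ * q i`, so the order of `ψ` divides the length
of every `φ`-orbit, hence `h`, and it divides `n!`. When `gcd(h, n!) = 1` this forces `ψ = 1`,
so writing `p = (φ, ψ) • r` with `r` a fixed representative of the orbit of `p` determines `ψ`,
and selecting `ψ` of the top alternative of the first individual in `r` is well defined,
Pareto optimal, anonymous and neutral.
-/

open Equiv Function MulAction

theorem dvd_card_of_dvd_minimalPeriod {α : Type*} [Fintype α] (σ : Perm α) {m : ℕ}
    (hm : ∀ a, m ∣ minimalPeriod σ a) : m ∣ Fintype.card α := by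
  classical
  rw [Fintype.card_congr (selfEquivSigmaOrbits (Subgroup.zpowers σ) α), Fintype.card_sigma]
  refine Finset.dvd_sum fun ω _ => ?_
  rw [← minimalPeriod_eq_card]
  exact hm _

theorem orderOf_dvd_card_of_apply_perm {ι G : Type*} [Fintype ι] [Group G] {q : ι → G}
    {σ : Perm ι} {g : G} (hq : ∀ i, q (σ i) = g * q i) : orderOf g ∣ Fintype.card ι := by
  have hpow : ∀ k i, q ((σ ^ k) i) = g ^ k * q i := by
    intro k
    induction k with
    | zero => simp
    | succ k ih => intro i; rw [pow_succ, Perm.mul_apply, ih, hq, pow_succ, mul_assoc]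
  refine dvd_card_of_dvd_minimalPeriod σ fun a => orderOf_dvd_of_pow_eq_one ?_
  have hper : (σ ^ minimalPeriod σ a) a = a := by
    rw [Perm.coe_pow, iterate_minimalPeriod]
  simpa [hper] using (hpow (minimalPeriod σ a) a).symm

theorem pow_val_finRotate {G : Type*} [Monoid G] {h : ℕ} {g : G} (hg : g ^ h = 1) (i : Fin h) :
    g ^ (finRotate h i : ℕ) = g * g ^ (i : ℕ) := by
  cases h with
  | zero => exact i.elim0
  | succ m =>
    rw [← pow_succ', coe_finRotate]
    split_ifs with hi
    · rw [hi, Fin.val_last, pow_zero, hg]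
    · rfl

namespace Moulin

variable {n h : ℕ}

instance : MulAction (Perm (Fin h) × Perm (Fin n)) (Profile n h) where
  smul g p := pact g.1 g.2 1 p
  one_smul p := by funext i; simp [HSMul.hSMul, pact]
  mul_smul g g' p := by funext i; simp [HSMul.hSMul, pact, mul_assoc]

lemma smul_def (g : Perm (Fin h) × Perm (Fin n)) (p : Profile n h) :
    g • p = pact g.1 g.2 1 p := rfl

lemma smul_eq_self_iff {g : Perm (Fin h) × Perm (Fin n)} {q : Profile n h} :
    g • q = q ↔ ∀ i, q (g.1 i) = g.2 * q i := by
  rw [funext_iff, ← g.1.forall_congr_right]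
  simp [smul_def, pact, eq_comm]

lemma snd_eq_one_of_smul_eq_self (hg : Nat.gcd h n.factorial = 1)
    {g : Perm (Fin h) × Perm (Fin n)} {q : Profile n h} (hgq : g • q = q) : g.2 = 1 := by
  have hdvd_h : orderOf g.2 ∣ h := by
    simpa using orderOf_dvd_card_of_apply_perm (smul_eq_self_iff.mp hgq)
  have hdvd_fact : orderOf g.2 ∣ n.factorial := by
    simpa [Fintype.card_perm] using orderOf_dvd_card (x := g.2)
  simpa using Nat.dvd_gcd hdvd_h hdvd_fact |>.trans hg.dvd

lemma snd_eq_of_smul_eq_smul (hg : Nat.gcd h n.factorial = 1)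
    {g g' : Perm (Fin h) × Perm (Fin n)} {q : Profile n h} (hgg' : g • q = g' • q) :
    g.2 = g'.2 := by
  have hstab : (g'⁻¹ * g) • q = q := by rw [mul_smul, hgg', inv_smul_smul]
  simpa [inv_mul_eq_one, eq_comm] using snd_eq_one_of_smul_eq_self hg hstab

lemma smul_mem_Par {g : Perm (Fin h) × Perm (Fin n)} {q : Profile n h} {x : Fin n}
    (hx : x ∈ Par q) : g.2 x ∈ Par (g • q) := by
  intro y hy
  obtain ⟨i, hi⟩ := hx (g.2⁻¹ y) (by rintro rfl; simp at hy)
  refine ⟨g.1 i, ?_⟩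
  simpa [prefGT, smul_def, pact, Perm.mul_def] using hi

lemma apply_zero_mem_Par [NeZero h] [NeZero n] (q : Profile n h) : q 0 0 ∈ Par q := by
  intro y hy
  refine ⟨0, ?_⟩
  simpa [prefGT, Fin.pos_iff_ne_zero, symm_apply_eq] using hy

noncomputable def orbitRep (p : Profile n h) : Profile n h :=
  (Quotient.mk (orbitRel (Perm (Fin h) × Perm (Fin n)) (Profile n h)) p).out

lemma orbitRep_smul (g : Perm (Fin h) × Perm (Fin n)) (p : Profile n h) :
    orbitRep (g • p) = orbitRep p :=
  congrArg Quotient.out (Quotient.sound ⟨g, rfl⟩)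

lemma exists_smul_orbitRep (p : Profile n h) :
    ∃ g : Perm (Fin h) × Perm (Fin n), g • orbitRep p = p :=
  mem_orbit_symm.mp (Quotient.mk_out (s := orbitRel _ _) p)

section Choice

variable [NeZero h] [NeZero n]

noncomputable def moulinChoice (p : Profile n h) : Fin n :=
  (exists_smul_orbitRep p).choose.2 (orbitRep p 0 0)

lemma moulinChoice_mem_Par (p : Profile n h) : moulinChoice p ∈ Par p := by
  have hmem := smul_mem_Par (g := (exists_smul_orbitRep p).choose)
    (apply_zero_mem_Par (orbitRep p))
  rwa [(exists_smul_orbitRep p).choose_spec] at hmem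

lemma moulinChoice_eq (hg : Nat.gcd h n.factorial = 1) {g : Perm (Fin h) × Perm (Fin n)}
    {p : Profile n h} (hgp : g • orbitRep p = p) : moulinChoice p = g.2 (orbitRep p 0 0) := by
  rw [moulinChoice,
    snd_eq_of_smul_eq_smul hg ((exists_smul_orbitRep p).choose_spec.trans hgp.symm)]

lemma moulinChoice_smul (hg : Nat.gcd h n.factorial = 1) (g : Perm (Fin h) × Perm (Fin n))
    (p : Profile n h) : moulinChoice (g • p) = g.2 (moulinChoice p) := by
  obtain ⟨t, ht⟩ := exists_smul_orbitRep p
  have hgt : (g * t) • orbitRep (g • p) = g • p := by rw [orbitRep_smul, mul_smul, ht]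
  rw [moulinChoice_eq hg hgt, moulinChoice_eq hg ht, orbitRep_smul]
  rfl

end Choice

lemma snd_apply_eq_of_smul_eq_self {C : SCC n h}
    (hanon : ∀ (p : Profile n h) (φ : Perm (Fin h)), C (pact φ 1 1 p) = C p)
    (hneut : ∀ (p : Profile n h) (ψ : Perm (Fin n)), C (pact 1 ψ 1 p) = ψ '' C p)
    {g : Perm (Fin h) × Perm (Fin n)} {q : Profile n h} (hgq : g • q = q) {x : Fin n}
    (hx : C q = {x}) : g.2 x = x := by
  have hsplit : g • q = pact 1 g.2 1 (pact g.1 1 1 q) := by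
    rw [← smul_def (1, g.2), ← smul_def (g.1, 1), ← mul_smul]
    rfl
  have hfix : C q = g.2 '' C q := by
    conv_lhs => rw [← hgq, hsplit, hneut, hanon]
  rw [hx, Set.image_singleton, Set.singleton_eq_singleton_iff] at hfix
  exact hfix.symm

def cyclicProfile (ψ : Perm (Fin n)) : Profile n h := fun i => ψ ^ (i : ℕ)

lemma finRotate_smul_cyclicProfile {ψ : Perm (Fin n)} (hψ : ψ ^ h = 1) :
    (finRotate h, ψ) • (cyclicProfile ψ : Profile n h) = cyclicProfile ψ :=
  smul_eq_self_iff.mpr (pow_val_finRotate hψ)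

lemma notMem_Par_cyclicProfile_cycleRange [NeZero n] {c : Fin n} (hc : c ≠ 0) {x : Fin n}
    (hx : Fin.cycleRange c x = x) : x ∉ Par (cyclicProfile (h := h) (Fin.cycleRange c)) := by
  have hcx : c < x := by
    by_contra! hxc
    have hval := Fin.coe_cycleRange_of_le hxc
    rw [hx] at hval
    split_ifs at hval with hxc'
    · subst hxc'
      exact hc (Fin.ext hval)
    · omega
  have hrank_x : ∀ k : ℕ, (Fin.cycleRange c ^ k).symm x = x := fun k =>
    (symm_apply_eq _).mpr (Perm.pow_apply_eq_self_of_apply_eq_self hx k).symm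
  have hrank_zero : ∀ k : ℕ, (Fin.cycleRange c ^ k).symm 0 ≤ c := by
    intro k
    by_contra! hw
    have hfix := Perm.pow_apply_eq_self_of_apply_eq_self (Fin.cycleRange_of_gt hw) k
    rw [apply_symm_apply] at hfix
    exact (Fin.zero_le c).not_gt (hfix ▸ hw)
  intro hpar
  obtain ⟨i, hi⟩ := hpar 0 (ne_of_lt ((Fin.zero_le c).trans_lt hcx))
  simp only [prefGT, cyclicProfile, hrank_x] at hi
  exact absurd (hi.trans_le (hrank_zero i)) hcx.not_gt

lemma exists_smul_eq_self_snd_apply_ne_of_mem_Par {p : ℕ} (hp : 2 ≤ p) (hph : p ∣ h)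
    (hpn : p ≤ n) : ∃ (q : Profile n h) (g : Perm (Fin h) × Perm (Fin n)),
      g • q = q ∧ ∀ x ∈ Par q, g.2 x ≠ x := by
  have : NeZero n := ⟨by omega⟩
  let c : Fin n := ⟨p - 1, by omega⟩
  have hc : c ≠ 0 := Fin.ne_of_val_ne (show p - 1 ≠ 0 by omega)
  have horder : orderOf (Fin.cycleRange c) = p := by
    rw [← Perm.lcm_cycleType, Fin.cycleType_cycleRange hc, Multiset.lcm_singleton, normalize_eq]
    exact Nat.sub_add_cancel (by omega)
  exact ⟨cyclicProfile (Fin.cycleRange c), _,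
    finRotate_smul_cyclicProfile (orderOf_dvd_iff_pow_eq_one.mp (horder ▸ hph)),
    fun x hx hfix => notMem_Par_cyclicProfile_cycleRange hc hfix hx⟩

end Moulin

theorem statement4_general {h n : ℕ} (hn : 2 ≤ n) :
    (∃ C : SCC n h, Resolute C ∧ Refines C Par ∧
        (∀ (p : Profile n h) (φ : Equiv.Perm (Fin h)), C (pact φ 1 1 p) = C p) ∧
        (∀ (p : Profile n h) (ψ : Equiv.Perm (Fin n)), C (pact 1 ψ 1 p) = ψ '' C p)) ↔
      Nat.gcd h (Nat.factorial n) = 1 := by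
  constructor
  · rintro ⟨C, hres, hpar, hanon, hneut⟩
    by_contra hg
    have hp := Nat.minFac_prime hg
    obtain ⟨q, g, hgq, hmoves⟩ := Moulin.exists_smul_eq_self_snd_apply_ne_of_mem_Par hp.two_le
      ((Nat.minFac_dvd _).trans (Nat.gcd_dvd_left _ _))
      (hp.dvd_factorial.mp ((Nat.minFac_dvd _).trans (Nat.gcd_dvd_right _ _)))
    obtain ⟨x, hx⟩ := hres q
    exact hmoves x (hpar q (hx ▸ rfl)) (Moulin.snd_apply_eq_of_smul_eq_self hanon hneut hgq hx)
  · intro hg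
    have : NeZero h := ⟨by rintro rfl; rw [Nat.gcd_zero_left, Nat.factorial_eq_one] at hg; omega⟩
    have : NeZero n := ⟨by omega⟩
    refine ⟨fun p => {Moulin.moulinChoice p}, fun p => ⟨_, rfl⟩,
      fun p => by simpa using Moulin.moulinChoice_mem_Par p, fun p φ => ?_, fun p ψ => ?_⟩
    · exact congrArg _ (Moulin.moulinChoice_smul hg (φ, 1) p)
    · rw [Set.image_singleton]
      exact congrArg _ (Moulin.moulinChoice_smul hg (1, ψ) p)

/-- Moulin's theorem: the Pareto scc admits an anonymous and neutral
resolute refinement if and only if `gcd(h, n!) = 1`. -/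
theorem statement4 {h n : ℕ} (hh : 2 ≤ h) (hn : 2 ≤ n) :
    (∃ C : SCC n h, Resolute C ∧ Refines C Par ∧
        (∀ (p : Profile n h) (φ : Equiv.Perm (Fin h)), C (pact φ 1 1 p) = C p) ∧
        (∀ (p : Profile n h) (ψ : Equiv.Perm (Fin n)), C (pact 1 ψ 1 p) = ψ '' C p)) ↔
      Nat.gcd h (Nat.factorial n) = 1 :=
  statement4_general hn
end

section
/- Let Y = {Y_1,…,Y_s} be a partition of H, Z = {Z_1,…,Z_t} be a partition of N with Z_{k*} a block of Z of maximal size, and R a subgroup of Ω = {id, ρ_0}. Then the subgroup V(Y) × W(Z) × R of G = S_h × S_n × Ω is regular if and only if gcd( gcd(|Y_1|,…,|Y_s|), lcm((|Z_{k*}|)!, |R|) ) = 1. In particular, G itself is regular if and only if gcd(h, n!) = 1. -/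
/-- The ambient group `S_h × S_n × S_n` (the third component is meant to range in `Ω`). -/
abbrev Amb (n h : ℕ) := Equiv.Perm (Fin h) × Equiv.Perm (Fin n) × Equiv.Perm (Fin n)

/-- The action `p ↦ p^g` of `g = (φ,ψ,ρ)` on profiles. -/
def gact {n h : ℕ} (g : Amb n h) (p : Profile n h) : Profile n h :=
  fun i => g.2.1 * p (g.1⁻¹ i) * g.2.2

/-- The group `Ω = {id, ρ₀}`. -/
def OmegaGrp (n : ℕ) : Subgroup (Equiv.Perm (Fin n)) := Subgroup.zpowers (rho0 n)

/-- The group `G = S_h × S_n × Ω`. -/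
def bigG (n h : ℕ) : Subgroup (Amb n h) :=
  (⊤ : Subgroup (Equiv.Perm (Fin h))).prod
    ((⊤ : Subgroup (Equiv.Perm (Fin n))).prod (OmegaGrp n))

/-- `U`-consistency of a social choice correspondence `C`: for every `p` and every
`(φ,ψ,ρ) ∈ U`, if `ρ = id` then `C(p^{(φ,ψ,id)}) = ψ C(p)`, and if `ρ = ρ₀` and
`|C(p)| = 1` then `C(p^{(φ,ψ,ρ₀)}) ≠ ψ C(p)`. -/
def UConsistent {n h : ℕ} (U : Subgroup (Amb n h)) (C : SCC n h) : Prop :=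
  ∀ (p : Profile n h), ∀ g ∈ U,
    (g.2.2 = 1 → C (gact g p) = g.2.1 '' C p) ∧
    (g.2.2 = rho0 n → ∀ x : Fin n, C p = {x} → C (gact g p) ≠ g.2.1 '' C p)

/-- A subgroup `U` of `G` is regular: for every profile `p` there is `ψ⋆ ∈ S_n`
conjugate to `ρ₀` with `Stab_U(p) ⊆ (S_h × {id} × {id}) ∪ (S_h × {ψ⋆} × {ρ₀})`. -/
def RegularSubgroup {n h : ℕ} (U : Subgroup (Amb n h)) : Prop :=
  ∀ p : Profile n h, ∃ ψs : Equiv.Perm (Fin n), IsConj (rho0 n) ψs ∧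
    ∀ g ∈ U, gact g p = p →
      (g.2.1 = 1 ∧ g.2.2 = 1) ∨ (g.2.1 = ψs ∧ g.2.2 = rho0 n)

/-- The subgroup of permutations preserving every block of the family `Y`
(this is `V(Y)`, resp. `W(Z)`, in the paper). -/
def permStab {α : Type*} [DecidableEq α] {s : ℕ} (Y : Fin s → Finset α) :
    Subgroup (Equiv.Perm α) where
  carrier := {φ | ∀ j, (Y j).image φ = Y j}
  one_mem' := by intro j; simp
  mul_mem' := by
    intro a b ha hb j
    have h1 : (Y j).image ⇑(a * b) = ((Y j).image ⇑b).image ⇑a := by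
      rw [Finset.image_image, Equiv.Perm.coe_mul]
    rw [h1, hb j, ha j]
  inv_mem' := by
    intro a ha j
    conv_lhs => rw [← ha j]
    rw [Finset.image_image]
    have h2 : (⇑a⁻¹ ∘ ⇑a) = id := by
      funext x; simp
    rw [h2, Finset.image_id]

/-!
An element `(φ, ψ, ρ)` fixes a profile `p` iff `p (φ j) = ψ * p j * ρ` for all `j`. When `ρ = 1`,
going once around a `φ`-cycle of length `ℓ` gives `ψ ^ ℓ = 1`, so the order of `ψ` divides every
cycle length of `φ`, hence every `|Y_j|`; it also divides `|Z_{k*}|!` because `ψ` permutes each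
block of `Z`. Under the gcd condition this forces `ψ = 1`; applied to quotients, it shows that all
stabilizers with `ρ = ρ₀` share the same `ψ₀`. If one exists then `2 ∣ |R|`, so some `|Y_j|` is odd,
its `φ₀` has an odd cycle, and going around that cycle shows that `ψ₀` is conjugate to `ρ₀`.

Conversely, a prime `q` dividing the gcd divides every `|Y_j|` and either `|Z_{k*}|!` or `|R|`. Take
`φ ∈ V(Y)` made of `q`-cycles and `σ` of order `q`: a `q`-cycle inside `Z_{k*}`, or `ρ₀`. The
profile giving individual `j` the preference `σ ^ (position of j on its φ-cycle)` is fixed by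
`(φ, σ, 1)`, resp. `(φ, 1, ρ₀)`, which regularity forbids.
-/

open Equiv Function

lemma Equiv.Perm.dvd_natCard_of_forall_pow_apply_eq_self {α : Type*} [Finite α] (σ : Perm α)
    {d : ℕ} (hd : ∀ x k, (σ ^ k) x = x → d ∣ k) : d ∣ Nat.card α := by
  classical
  have := Fintype.ofFinite α
  rw [Nat.card_congr (MulAction.selfEquivSigmaOrbits (Subgroup.zpowers σ) α), Nat.card_sigma]
  refine Finset.dvd_sum fun ω _ => ?_
  rw [Nat.card_eq_fintype_card, ← MulAction.minimalPeriod_eq_card]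
  exact hd _ _ (by rw [Perm.coe_pow]; exact isPeriodicPt_minimalPeriod (σ • ·) ω.out)

lemma rho0_sq (n : ℕ) : rho0 n ^ 2 = 1 := by
  ext x
  simp [rho0, sq]

lemma rho0_ne_one {n : ℕ} (hn : 2 ≤ n) : rho0 n ≠ 1 := by
  intro h
  have := congrArg (fun σ : Perm (Fin n) => (σ ⟨0, by omega⟩ : ℕ)) h
  simp [rho0] at this
  omega

lemma orderOf_rho0 {n : ℕ} (hn : 2 ≤ n) : orderOf (rho0 n) = 2 :=
  have : Fact (Nat.Prime 2) := ⟨Nat.prime_two⟩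
  orderOf_eq_prime (rho0_sq n) (rho0_ne_one hn)

lemma card_omegaGrp {n : ℕ} (hn : 2 ≤ n) : Nat.card (OmegaGrp n) = 2 := by
  rw [OmegaGrp, Nat.card_zpowers, orderOf_rho0 hn]

lemma eq_one_or_eq_rho0_of_mem_omegaGrp {n : ℕ} {ω : Perm (Fin n)} (hω : ω ∈ OmegaGrp n) :
    ω = 1 ∨ ω = rho0 n := by
  obtain ⟨k, rfl⟩ := Subgroup.mem_zpowers_iff.mp hω
  have hsq : rho0 n ^ (2 : ℤ) = 1 := by rw [zpow_ofNat, rho0_sq]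
  rcases Int.even_or_odd' k with ⟨m, rfl | rfl⟩
  · left; rw [zpow_mul, hsq, one_zpow]
  · right; rw [zpow_add, zpow_mul, hsq, one_zpow, one_mul, zpow_one]

lemma IsPartition.exists_block {α : Type*} {s : ℕ} {Y : Fin s → Finset α}
    (hY : IsPartition Y) : ∃ b : α → Fin s, ∀ x j, x ∈ Y j ↔ b x = j := by
  choose b hb using hY.2.2
  refine ⟨b, fun x j => ⟨fun hx => ?_, fun h => h ▸ hb x⟩⟩
  by_contra hne
  exact Finset.disjoint_left.mp (hY.2.1 _ _ hne) (hb x) hx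

lemma mem_permStab_iff {α : Type*} [DecidableEq α] {s : ℕ} {Y : Fin s → Finset α}
    {φ : Perm α} : φ ∈ permStab Y ↔ ∀ j x, φ x ∈ Y j ↔ x ∈ Y j := by
  refine ⟨fun hφ j x => ?_, fun hφ j => ?_⟩
  · nth_rewrite 1 [← hφ j]
    exact φ.injective.mem_finset_image
  · ext y
    simp only [Finset.mem_image]
    exact ⟨fun ⟨x, hx, hxy⟩ => hxy ▸ (hφ j x).mpr hx,
      fun hy => ⟨φ.symm y, (hφ j _).mp (by simpa using hy), by simp⟩⟩

lemma dvd_gcd_card_of_mem_permStab {α : Type*} [DecidableEq α] {s : ℕ}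
    {Y : Fin s → Finset α} {φ : Perm α} (hφ : φ ∈ permStab Y) {d : ℕ}
    (hd : ∀ x k, (φ ^ k) x = x → d ∣ k) : d ∣ Finset.univ.gcd fun j => (Y j).card := by
  refine Finset.dvd_gcd fun j _ => ?_
  rw [← Nat.card_eq_finsetCard]
  refine (φ.subtypePerm (mem_permStab_iff.mp hφ j)).dvd_natCard_of_forall_pow_apply_eq_self
    fun x k hx => hd x k ?_
  simpa [Perm.subtypePerm_pow, Subtype.ext_iff] using hx

lemma exists_pow_apply_eq_self_odd_of_mem_permStab {α : Type*} [DecidableEq α] {s : ℕ}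
    {Y : Fin s → Finset α} {φ : Perm α} (hφ : φ ∈ permStab Y)
    (hY : ¬ 2 ∣ Finset.univ.gcd fun j => (Y j).card) : ∃ x k, (φ ^ k) x = x ∧ Odd k := by
  by_contra! hev
  exact hY (dvd_gcd_card_of_mem_permStab hφ fun x k hx =>
    even_iff_two_dvd.mp (Nat.not_odd_iff_even.mp (hev x k hx)))

lemma pow_factorial_eq_one_of_mem_permStab {α : Type*} [DecidableEq α] {t : ℕ}
    {Z : Fin t → Finset α} (hZ : ∀ a, ∃ k, a ∈ Z k) {ψ : Perm α} (hψ : ψ ∈ permStab Z)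
    {m : ℕ} (hm : ∀ k, (Z k).card ≤ m) : ψ ^ m.factorial = 1 := by
  ext x
  obtain ⟨k, hx⟩ := hZ x
  set τ := ψ.subtypePerm (mem_permStab_iff.mp hψ k)
  have hτ : τ ^ m.factorial = 1 := by
    refine orderOf_dvd_iff_pow_eq_one.mp (orderOf_dvd_card.trans ?_)
    rw [Fintype.card_perm, Fintype.card_coe]
    exact Nat.factorial_dvd_factorial (hm k)
  simpa [τ, Perm.subtypePerm_pow, Perm.ext_iff] using congrArg (fun σ => (σ ⟨x, hx⟩ : α)) hτ

section Profiles

variable {n h : ℕ} {p : Profile n h} {φ φ₀ : Perm (Fin h)} {ψ ψ₀ ρ : Perm (Fin n)}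

lemma gact_eq_self_iff : gact (φ, ψ, ρ) p = p ↔ ∀ j, p (φ j) = ψ * p j * ρ := by
  refine ⟨fun hp j => ?_, fun hp => funext fun i => ?_⟩
  · simpa [gact] using (congrFun hp (φ j)).symm
  · simpa [gact] using (hp (φ⁻¹ i)).symm

lemma profile_pow_apply (hp : ∀ j, p (φ j) = ψ * p j * ρ) (k : ℕ) (j : Fin h) :
    p ((φ ^ k) j) = ψ ^ k * p j * ρ ^ k := by
  induction k with
  | zero => simp
  | succ k ih =>
    rw [pow_succ', Perm.mul_apply, hp, ih, pow_succ' ψ, pow_succ ρ]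
    group

lemma profile_mul_inv_apply (hp : ∀ j, p (φ j) = ψ * p j * ρ)
    (hp₀ : ∀ j, p (φ₀ j) = ψ₀ * p j * ρ) (j : Fin h) :
    p ((φ * φ₀⁻¹) j) = ψ * ψ₀⁻¹ * p j := by
  have hinv : p (φ₀⁻¹ j) = ψ₀⁻¹ * p j * ρ⁻¹ := by
    have := hp₀ (φ₀⁻¹ j)
    rw [← Perm.mul_apply, mul_inv_cancel, Perm.one_apply] at this
    rw [this]
    group
  rw [Perm.mul_apply, hp, hinv]
  group

lemma isConj_of_pow_apply_eq_self_of_odd (hp : ∀ j, p (φ j) = ψ * p j * ρ) (hψ : ψ ^ 2 = 1)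
    (hρ : ρ ^ 2 = 1) {x : Fin h} {k : ℕ} (hx : (φ ^ k) x = x) (hk : Odd k) : IsConj ρ ψ := by
  have hodd : ∀ σ : Perm (Fin n), σ ^ 2 = 1 → σ ^ k = σ := fun σ hσ => by
    obtain ⟨m, rfl⟩ := hk
    rw [pow_succ, pow_mul, hσ, one_pow, one_mul]
  have hpx := profile_pow_apply hp k x
  rw [hx, hodd ψ hψ, hodd ρ hρ] at hpx
  refine isConj_iff.mpr ⟨p x, ?_⟩
  calc p x * ρ * (p x)⁻¹ = ψ * p x * (ρ * ρ) * (p x)⁻¹ := by nth_rewrite 1 [hpx]; group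
    _ = ψ := by rw [← sq, hρ]; group

end Profiles

lemma eq_one_of_mem_permStab_of_coprime {h n s t m : ℕ} {Y : Fin s → Finset (Fin h)}
    {Z : Fin t → Finset (Fin n)} (hZ : ∀ a, ∃ k, a ∈ Z k) (hm : ∀ k, (Z k).card ≤ m)
    (hcop : Nat.Coprime (Finset.univ.gcd fun j => (Y j).card) m.factorial) {p : Profile n h}
    {φ : Perm (Fin h)} {ψ : Perm (Fin n)} (hφ : φ ∈ permStab Y) (hψ : ψ ∈ permStab Z)
    (hp : ∀ j, p (φ j) = ψ * p j) : ψ = 1 := by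
  have hY : orderOf ψ ∣ Finset.univ.gcd fun j => (Y j).card := by
    refine dvd_gcd_card_of_mem_permStab hφ fun x k hx => orderOf_dvd_of_pow_eq_one ?_
    have := profile_pow_apply (ρ := 1) (by simpa using hp) k x
    rwa [hx, one_pow, mul_one, eq_comm, mul_eq_right] at this
  have hZ : orderOf ψ ∣ m.factorial :=
    orderOf_dvd_of_pow_eq_one (pow_factorial_eq_one_of_mem_permStab hZ hψ hm)
  exact orderOf_eq_one_iff.mp (Nat.eq_one_of_dvd_coprimes hcop hY hZ)

theorem regularSubgroup_of_gcd_eq_one {h n s t : ℕ} (hn : 2 ≤ n) {Y : Fin s → Finset (Fin h)}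
    {Z : Fin t → Finset (Fin n)} (hZ : IsPartition Z) {kstar : Fin t}
    (hks : ∀ k, (Z k).card ≤ (Z kstar).card) {R : Subgroup (Perm (Fin n))} (hR : R ≤ OmegaGrp n)
    (hgcd : Nat.gcd (Finset.univ.gcd fun j => (Y j).card)
      (Nat.lcm (Nat.factorial (Z kstar).card) (Nat.card R)) = 1) :
    RegularSubgroup ((permStab Y).prod ((permStab Z).prod R)) := by
  intro p
  have key : ∀ φ ψ, φ ∈ permStab Y → ψ ∈ permStab Z → (∀ j, p (φ j) = ψ * p j) → ψ = 1 :=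
    fun φ ψ => eq_one_of_mem_permStab_of_coprime hZ.2.2 hks
      (Nat.Coprime.coprime_dvd_right (Nat.dvd_lcm_left _ _) hgcd)
  have hstab : ∀ g ∈ (permStab Y).prod ((permStab Z).prod R), gact g p = p →
      g.2.2 = 1 ∧ g.2.1 = 1 ∨ g.2.2 = rho0 n ∧ ∀ j, p (g.1 j) = g.2.1 * p j * rho0 n := by
    rintro ⟨φ, ψ, ρ⟩ hg hfix
    simp only [Subgroup.mem_prod] at hg
    rw [gact_eq_self_iff] at hfix
    rcases eq_one_or_eq_rho0_of_mem_omegaGrp (hR hg.2.2) with rfl | rfl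
    · exact .inl ⟨rfl, key φ ψ hg.1 hg.2.1 (by simpa using hfix)⟩
    · exact .inr ⟨rfl, hfix⟩
  by_cases hex : ∃ g ∈ (permStab Y).prod ((permStab Z).prod R), gact g p = p ∧ g.2.2 = rho0 n
  · obtain ⟨⟨φ₀, ψ₀, ρ₀⟩, hg₀, hfix₀, rfl : ρ₀ = rho0 n⟩ := hex
    simp only [Subgroup.mem_prod] at hg₀
    rw [gact_eq_self_iff] at hfix₀
    have hψsq : ψ₀ ^ 2 = 1 := key _ _ (pow_mem hg₀.1 2) (pow_mem hg₀.2.1 2)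
      (by simpa [rho0_sq] using profile_pow_apply hfix₀ 2)
    have hY2 : ¬ 2 ∣ Finset.univ.gcd fun j => (Y j).card := fun h2Y => by
      have h2R : 2 ∣ Nat.card R := orderOf_rho0 hn ▸ Subgroup.orderOf_dvd_natCard R hg₀.2.2
      have := Nat.dvd_gcd h2Y (h2R.trans (Nat.dvd_lcm_right (Z kstar).card.factorial _))
      rw [hgcd] at this
      omega
    obtain ⟨x, k, hx, hk⟩ := exists_pow_apply_eq_self_odd_of_mem_permStab hg₀.1 hY2
    refine ⟨ψ₀, isConj_of_pow_apply_eq_self_of_odd hfix₀ hψsq (rho0_sq n) hx hk,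
      fun g hg hfix => ?_⟩
    rcases hstab g hg hfix with ⟨hρ, hψ⟩ | ⟨hρ, hfix'⟩
    · exact .inl ⟨hψ, hρ⟩
    refine .inr ⟨mul_inv_eq_one.mp ?_, hρ⟩
    have hg' := Subgroup.mem_prod.mp hg
    exact key _ _ (mul_mem hg'.1 (inv_mem hg₀.1))
      (mul_mem (Subgroup.mem_prod.mp hg'.2).1 (inv_mem hg₀.2.1)) (profile_mul_inv_apply hfix' hfix₀)
  · refine ⟨rho0 n, IsConj.refl _, fun g hg hfix => ?_⟩
    rcases hstab g hg hfix with ⟨hρ, hψ⟩ | ⟨hρ, -⟩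
    · exact .inl ⟨hψ, hρ⟩
    · exact absurd ⟨g, hg, hfix, hρ⟩ hex

lemma exists_perm_forall_apply_add_one {α ι : Type*} [Finite α] (b : α → ι) {q : ℕ} [NeZero q]
    (hq : ∀ i, q ∣ Nat.card {x // b x = i}) :
    ∃ (φ : Perm α) (f : α → Fin q), (∀ x, b (φ x) = b x) ∧ ∀ x, f (φ x) = f x + 1 := by
  -- each fibre of `b` is split into `q`-cycles, along which `f` counts modulo `q`
  let e (i : ι) : {x // b x = i} ≃ Fin (Nat.card {x // b x = i} / q) × Fin q :=
    (Finite.equivFin _).trans ((finCongr (Nat.div_mul_cancel (hq i)).symm).trans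
      finProdFinEquiv.symm)
  let E : α ≃ Σ i, Fin (Nat.card {x // b x = i} / q) × Fin q :=
    (Equiv.sigmaFiberEquiv b).symm.trans (Equiv.sigmaCongrRight e)
  let T : Perm (Σ i, Fin (Nat.card {x // b x = i} / q) × Fin q) :=
    Equiv.sigmaCongrRight fun _ => Equiv.prodCongr (Equiv.refl _) (Equiv.addRight 1)
  refine ⟨(E.trans T).trans E.symm, fun x => (E x).2.2, fun x => ?_, fun x => ?_⟩
  · change (E (E.symm (T (E x)))).1 = (E x).1
    rw [E.apply_symm_apply]
    rfl
  · change (E (E.symm (T (E x)))).2.2 = _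
    rw [E.apply_symm_apply]
    rfl

lemma exists_mem_permStab_forall_apply_add_one {α : Type*} [Finite α] [DecidableEq α] {s : ℕ}
    {Y : Fin s → Finset α} (hY : IsPartition Y) {q : ℕ} [NeZero q] (hq : ∀ j, q ∣ (Y j).card) :
    ∃ φ ∈ permStab Y, ∃ f : α → Fin q, ∀ x, f (φ x) = f x + 1 := by
  obtain ⟨b, hb⟩ := hY.exists_block
  have hcard (j : Fin s) : Nat.card {x // b x = j} = (Y j).card := by
    rw [← Nat.card_eq_finsetCard]
    exact Nat.card_congr (Equiv.subtypeEquivRight fun x => (hb x j).symm)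
  obtain ⟨φ, f, hφ, hf⟩ := exists_perm_forall_apply_add_one b fun j => hcard j ▸ hq j
  exact ⟨φ, mem_permStab_iff.mpr fun j x => by rw [hb, hb, hφ], f, hf⟩

lemma pow_val_add_one_s5 {G : Type*} [Monoid G] {σ : G} {q : ℕ} [NeZero q] (hσ : σ ^ q = 1)
    (a : Fin q) : σ ^ (a + 1).val = σ ^ (a.val + 1) := by
  rw [Fin.val_add, Fin.val_one', Nat.add_mod_mod, ← pow_eq_pow_mod _ hσ]

lemma exists_mem_permStab_profile_apply {h n s : ℕ} {Y : Fin s → Finset (Fin h)}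
    (hY : IsPartition Y) {q : ℕ} (hq : 0 < q) (hqY : ∀ j, q ∣ (Y j).card) {σ : Perm (Fin n)}
    (hσ : σ ^ q = 1) :
    ∃ φ ∈ permStab Y, ∃ p : Profile n h, ∀ j, p (φ j) = σ * p j ∧ p (φ j) = p j * σ := by
  have : NeZero q := ⟨hq.ne'⟩
  obtain ⟨φ, hφ, f, hf⟩ := exists_mem_permStab_forall_apply_add_one hY hqY
  refine ⟨φ, hφ, fun x => σ ^ (f x).val, fun j => ?_⟩
  simp only [hf, pow_val_add_one_s5 hσ]
  exact ⟨pow_succ' _ _, pow_succ _ _⟩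

lemma IsPartition.exists_mem_permStab_orderOf_eq {α : Type*} [Finite α] [DecidableEq α] {t : ℕ}
    {Z : Fin t → Finset α} (hZ : IsPartition Z) {k : Fin t} {q : ℕ} (hq : q.Prime)
    (hqk : q ≤ (Z k).card) : ∃ ψ ∈ permStab Z, orderOf ψ = q := by
  have : Fact q.Prime := ⟨hq⟩
  obtain ⟨τ, hτ⟩ := exists_prime_orderOf_dvd_card' (G := Perm {x // x ∈ Z k}) q
    (by rw [Nat.card_perm, Nat.card_eq_finsetCard]; exact Nat.dvd_factorial hq.pos hqk)
  obtain ⟨b, hb⟩ := hZ.exists_block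
  refine ⟨Perm.ofSubtype τ, mem_permStab_iff.mpr fun j x => ?_, ?_⟩
  · by_cases hx : x ∈ Z k
    · rw [Perm.ofSubtype_apply_of_mem τ hx, hb, hb, (hb _ _).mp (τ ⟨x, hx⟩).2, (hb _ _).mp hx]
    · rw [Perm.ofSubtype_apply_of_not_mem τ hx]
  · rw [orderOf_injective Perm.ofSubtype Perm.ofSubtype_injective, hτ]

theorem gcd_eq_one_of_regularSubgroup {h n s t : ℕ} (hn : 2 ≤ n) {Y : Fin s → Finset (Fin h)}
    (hY : IsPartition Y) {Z : Fin t → Finset (Fin n)} (hZ : IsPartition Z) {kstar : Fin t}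
    {R : Subgroup (Perm (Fin n))} (hR : R ≤ OmegaGrp n)
    (hreg : RegularSubgroup ((permStab Y).prod ((permStab Z).prod R))) :
    Nat.gcd (Finset.univ.gcd fun j => (Y j).card)
      (Nat.lcm (Nat.factorial (Z kstar).card) (Nat.card R)) = 1 := by
  by_contra hgcd
  obtain ⟨q, hq, hqdvd⟩ := Nat.exists_prime_and_dvd hgcd
  have hqY (j : Fin s) : q ∣ (Y j).card :=
    (hqdvd.trans (Nat.gcd_dvd_left _ _)).trans (Finset.gcd_dvd (Finset.mem_univ j))
  have hqlcm := (hqdvd.trans (Nat.gcd_dvd_right _ _)).trans (Nat.lcm_dvd_mul _ _)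
  rcases hq.dvd_mul.mp hqlcm with hqZ | hqR
  · obtain ⟨ψ, hψ, hψq⟩ := hZ.exists_mem_permStab_orderOf_eq hq (hq.dvd_factorial.mp hqZ)
    obtain ⟨φ, hφ, p, hp⟩ :=
      exists_mem_permStab_profile_apply hY hq.pos hqY (hψq ▸ pow_orderOf_eq_one ψ)
    obtain ⟨_, -, hstab⟩ := hreg p
    rcases hstab (φ, ψ, 1) ⟨hφ, hψ, one_mem R⟩
      (gact_eq_self_iff.mpr fun j => by rw [mul_one, (hp j).1]) with ⟨hψ1, -⟩ | ⟨-, hρ⟩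
    · exact hq.one_lt.ne' (hψq ▸ orderOf_eq_one_iff.mpr hψ1)
    · exact rho0_ne_one hn hρ.symm
  · have : Fact q.Prime := ⟨hq⟩
    obtain ⟨ρ, hρq⟩ := exists_prime_orderOf_dvd_card' q hqR
    have hρ : (ρ : Perm (Fin n)) = rho0 n := by
      refine (eq_one_or_eq_rho0_of_mem_omegaGrp (hR ρ.2)).resolve_left fun hρ1 => ?_
      rw [← orderOf_submonoid, hρ1, orderOf_one] at hρq
      exact hq.one_lt.ne hρq
    have hρpow : rho0 n ^ q = 1 := by
      rw [← hρ, ← hρq, ← orderOf_submonoid]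
      exact pow_orderOf_eq_one _
    obtain ⟨φ, hφ, p, hp⟩ := exists_mem_permStab_profile_apply hY hq.pos hqY hρpow
    obtain ⟨ψs, hconj, hstab⟩ := hreg p
    rcases hstab (φ, 1, rho0 n) ⟨hφ, one_mem _, hρ ▸ ρ.2⟩
      (gact_eq_self_iff.mpr fun j => by rw [one_mul, (hp j).2]) with ⟨-, hρ1⟩ | ⟨hψs, -⟩
    · exact rho0_ne_one hn hρ1
    · rw [← hψs] at hconj
      exact rho0_ne_one hn (isConj_one_left.mp hconj)

theorem regularSubgroup_iff {h n s t : ℕ} (hn : 2 ≤ n) {Y : Fin s → Finset (Fin h)}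
    (hY : IsPartition Y) {Z : Fin t → Finset (Fin n)} (hZ : IsPartition Z) {kstar : Fin t}
    (hks : ∀ k, (Z k).card ≤ (Z kstar).card) {R : Subgroup (Perm (Fin n))}
    (hR : R ≤ OmegaGrp n) :
    RegularSubgroup ((permStab Y).prod ((permStab Z).prod R)) ↔
      Nat.gcd (Finset.univ.gcd fun j => (Y j).card)
        (Nat.lcm (Nat.factorial (Z kstar).card) (Nat.card R)) = 1 :=
  ⟨gcd_eq_one_of_regularSubgroup hn hY hZ hR, regularSubgroup_of_gcd_eq_one hn hZ hks hR⟩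

lemma isPartition_const_univ {α : Type*} [Fintype α] [Nonempty α] :
    IsPartition fun _ : Fin 1 => (Finset.univ : Finset α) :=
  ⟨fun _ => Finset.univ_nonempty, fun j k hjk => absurd (Subsingleton.elim j k) hjk,
    fun _ => ⟨0, Finset.mem_univ _⟩⟩

lemma permStab_const_univ {α : Type*} [Fintype α] [DecidableEq α] :
    permStab (fun _ : Fin 1 => (Finset.univ : Finset α)) = ⊤ :=
  eq_top_iff.mpr fun φ _ _ => Finset.image_univ_equiv φ

/-- Theorem `regular`: `V(Y) × W(Z) × R` is a regular subgroup of
`G = S_h × S_n × Ω` iff `gcd(gcd(|Y_1|,…,|Y_s|), lcm((|Z_{k*}|)!, |R|)) = 1`;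
in particular `G` itself is regular iff `gcd(h, n!) = 1`. -/
theorem statement5 {h n s t : ℕ} (hh : 2 ≤ h) (hn : 2 ≤ n)
    (Y : Fin s → Finset (Fin h)) (hY : IsPartition Y)
    (Z : Fin t → Finset (Fin n)) (hZ : IsPartition Z)
    (kstar : Fin t) (hks : ∀ k, (Z k).card ≤ (Z kstar).card)
    (R : Subgroup (Equiv.Perm (Fin n))) (hR : R ≤ OmegaGrp n) :
    (RegularSubgroup ((permStab Y).prod ((permStab Z).prod R)) ↔
      Nat.gcd (Finset.univ.gcd fun j => (Y j).card)
        (Nat.lcm (Nat.factorial (Z kstar).card) (Nat.card R)) = 1) ∧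
    (RegularSubgroup (bigG n h) ↔ Nat.gcd h (Nat.factorial n) = 1) := by
  refine ⟨regularSubgroup_iff hn hY hZ hks hR, ?_⟩
  have : Nonempty (Fin h) := ⟨⟨0, by omega⟩⟩
  have : Nonempty (Fin n) := ⟨⟨0, by omega⟩⟩
  have hG : bigG n h = (permStab fun _ : Fin 1 => Finset.univ).prod
      ((permStab fun _ : Fin 1 => Finset.univ).prod (OmegaGrp n)) := by
    rw [bigG, permStab_const_univ, permStab_const_univ]
  rw [hG, regularSubgroup_iff hn isPartition_const_univ isPartition_const_univ
    (kstar := 0) (fun _ => le_rfl) le_rfl, card_omegaGrp hn]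
  simp [Nat.lcm_eq_left (Nat.dvd_factorial two_pos hn)]
end
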